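/- arXiv:math/0409309 — 5 statements merged into one kernel-verified Lean document; each statement's English description precedes it below -/
import Mathlib

section
/- Let r₀, r₁, r₂ ∈ L⁺ be linearly independent vectors of the open positive light cone, and let λ₀, λ₁, λ₂ be positive real numbers. Then there exist unique positive reals t₀, t₁, t₂ such that for every permutation {i,j,k} = {0,1,2} one has λ(t_j·r_j, t_k·r_k) = λ_i, i.e. −⟨t_j·r_j, t_k·r_k⟩ = λ_i². Moreover, (t₀,t₁,t₂) depends continuously on the data (r₀,r₁,r₂,λ₀,λ₁,λ₂) on the set of linearly independent triples in L⁺ times (ℝ_{>0})³. -/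
/-- The Minkowski bilinear form on `ℝ³` with quadratic form `x² + y² - z²`. -/
def mink (u v : Fin 3 → ℝ) : ℝ := u 0 * v 0 + u 1 * v 1 - u 2 * v 2

/-- The open positive light cone `L⁺`. -/
def Lplus : Set (Fin 3 → ℝ) := {u | mink u u = 0 ∧ 0 < u 2}

/-- The space of data: a linearly independent triple `r₀, r₁, r₂` of points of the
light cone together with a triple of positive reals `λ₀, λ₁, λ₂`. -/
def Data : Set ((Fin 3 → (Fin 3 → ℝ)) × (Fin 3 → ℝ)) :=
  {p | (∀ i, p.1 i ∈ Lplus) ∧ LinearIndependent ℝ p.1 ∧ (∀ i, 0 < p.2 i)}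

namespace ScalingAux

lemma mink_smul (c d : ℝ) (u v : Fin 3 → ℝ) :
    mink (c • u) (d • v) = c * d * mink u v := by
  simp only [mink, Pi.smul_apply, smul_eq_mul]; ring

lemma mink_symm (u v : Fin 3 → ℝ) : mink u v = mink v u := by
  simp only [mink]; ring

lemma mink_neg_of_indep {u v : Fin 3 → ℝ} (hu : u ∈ Lplus) (hv : v ∈ Lplus)
    (hne : (v 2) • u ≠ (u 2) • v) : mink u v < 0 := by
  by_contra h
  push_neg at h
  obtain ⟨hu0, hu2⟩ := hu
  obtain ⟨hv0, hv2⟩ := hv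
  simp only [mink] at hu0 hv0 h
  apply hne
  have hm : (0:ℝ) ≤ (u 2 * v 2) * (u 0 * v 0 + u 1 * v 1 - u 2 * v 2) :=
    mul_nonneg (mul_pos hu2 hv2).le h
  have key : (v 2 * u 0 - u 2 * v 0)^2 + (v 2 * u 1 - u 2 * v 1)^2 ≤ 0 := by
    nlinarith [hm, hu0, hv0]
  have h0 : v 2 * u 0 - u 2 * v 0 = 0 := by
    nlinarith [sq_nonneg (v 2 * u 0 - u 2 * v 0), sq_nonneg (v 2 * u 1 - u 2 * v 1)]
  have h1 : v 2 * u 1 - u 2 * v 1 = 0 := by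
    nlinarith [sq_nonneg (v 2 * u 0 - u 2 * v 0), sq_nonneg (v 2 * u 1 - u 2 * v 1)]
  funext i
  fin_cases i <;>
    simp only [Pi.smul_apply, smul_eq_mul, Fin.mk_zero, Fin.mk_one, show (⟨2, by norm_num⟩ : Fin 3) = 2 from rfl] <;>
    linarith

lemma smul_ne {r : Fin 3 → Fin 3 → ℝ} (h : LinearIndependent ℝ r) {i j : Fin 3}
    (hij : i ≠ j) {c d : ℝ} (hc : c ≠ 0) : c • r i ≠ d • r j := by
  intro he
  have hg := Fintype.linearIndependent_iff.mp h
      (fun l => if l = i then c else if l = j then -d else 0) ?_ i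
  · simp only [if_pos rfl] at hg
    exact hc hg
  · fin_cases i <;> fin_cases j <;> simp_all [Fin.sum_univ_three]

/-- `a i = -⟨r_{i+1}, r_{i+2}⟩`. -/
noncomputable def aa (p : (Fin 3 → (Fin 3 → ℝ)) × (Fin 3 → ℝ)) (i : Fin 3) : ℝ :=
  -(mink (p.1 (i+1)) (p.1 (i+2)))

noncomputable def Fv (p : (Fin 3 → (Fin 3 → ℝ)) × (Fin 3 → ℝ)) (i : Fin 3) : ℝ :=
  Real.sqrt ((p.2 (i+1))^2 * (p.2 (i+2))^2 * aa p i /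
    ((p.2 i)^2 * aa p (i+1) * aa p (i+2)))

lemma aa_pos {p : (Fin 3 → (Fin 3 → ℝ)) × (Fin 3 → ℝ)} (hp : p ∈ Data) (i : Fin 3) :
    0 < aa p i := by
  obtain ⟨hL, hind, -⟩ := hp
  have h12 : (i+1 : Fin 3) ≠ i+2 := by revert i; decide
  have hne : (p.1 (i+2) 2) • p.1 (i+1) ≠ (p.1 (i+1) 2) • p.1 (i+2) :=
    smul_ne hind h12 (ne_of_gt (hL (i+2)).2)
  have := mink_neg_of_indep (hL (i+1)) (hL (i+2)) hne
  simp only [aa]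
  linarith

lemma key (a0 a1 a2 l0 l1 l2 : ℝ) (ha0 : 0 < a0) (ha1 : 0 < a1) (ha2 : 0 < a2)
    (hl0 : 0 < l0) (hl1 : 0 < l1) (hl2 : 0 < l2) :
    Real.sqrt (l2^2 * l0^2 * a1 / (l1^2 * a2 * a0)) *
      Real.sqrt (l0^2 * l1^2 * a2 / (l2^2 * a0 * a1)) * a0 = l0^2 := by
  rw [← Real.sqrt_mul (by positivity)]
  have h : l2^2 * l0^2 * a1 / (l1^2 * a2 * a0) * (l0^2 * l1^2 * a2 / (l2^2 * a0 * a1))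
      = (l0^2 / a0)^2 := by
    field_simp
  rw [h, Real.sqrt_sq (by positivity)]
  field_simp

lemma f11 : ∀ i : Fin 3, i+1+1 = i+2 := by decide
lemma f12 : ∀ i : Fin 3, i+1+2 = i := by decide
lemma f21 : ∀ i : Fin 3, i+2+1 = i := by decide
lemma f22 : ∀ i : Fin 3, i+2+2 = i+1 := by decide
lemma fne1 : ∀ i : Fin 3, i ≠ i+1 := by decide
lemma fne2 : ∀ i : Fin 3, i ≠ i+2 := by decide
lemma fne12 : ∀ i : Fin 3, i+1 ≠ i+2 := by decide

lemma uni (t0 t1 t2 a0 a1 a2 l0 l1 l2 : ℝ)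
    (e0 : t1 * t2 * a0 = l0^2) (e1 : t2 * t0 * a1 = l1^2) (e2 : t0 * t1 * a2 = l2^2) :
    t0^2 * (l0^2 * a1 * a2) = l1^2 * l2^2 * a0 := by
  linear_combination (-(t0^2*a1*a2)) * e0 + (a0*l2^2) * e1 + (a0*t2*t0*a1) * e2

end ScalingAux

open ScalingAux in
/-- Lemma 1 of [Penner, Lemma 2.4] ... -/
theorem scaling_exists_unique_continuous :
    ∃ F : Data → (Fin 3 → ℝ),
      Continuous F ∧
      ∀ p : Data,
        (∀ i, 0 < F p i) ∧
        (∀ i j k : Fin 3, i ≠ j → j ≠ k → i ≠ k →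
          -(mink (F p j • p.val.1 j) (F p k • p.val.1 k)) = (p.val.2 i) ^ 2) ∧
        (∀ t : Fin 3 → ℝ, (∀ i, 0 < t i) →
          (∀ i j k : Fin 3, i ≠ j → j ≠ k → i ≠ k →
            -(mink (t j • p.val.1 j) (t k • p.val.1 k)) = (p.val.2 i) ^ 2) →
          t = F p) := by
  refine ⟨fun q => fun i => Fv q.val i, ?_, ?_⟩
  · -- continuity
    apply continuous_pi
    intro i
    have hcoord : ∀ j k : Fin 3, Continuous fun q : ↥Data => q.val.1 j k := fun j k =>
      (continuous_apply k).comp ((continuous_apply j).comp (continuous_fst.comp continuous_subtype_val))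
    have hlam : ∀ j : Fin 3, Continuous fun q : ↥Data => q.val.2 j := fun j =>
      (continuous_apply j).comp (continuous_snd.comp continuous_subtype_val)
    have haa : ∀ j : Fin 3, Continuous fun q : ↥Data => aa q.val j := by
      intro j
      simp only [aa, mink]
      exact ((((hcoord (j+1) 0).mul (hcoord (j+2) 0)).add
        ((hcoord (j+1) 1).mul (hcoord (j+2) 1))).sub
        ((hcoord (j+1) 2).mul (hcoord (j+2) 2))).neg
    have hN : Continuous fun q : ↥Data =>
        (q.val.2 (i+1))^2 * (q.val.2 (i+2))^2 * aa q.val i :=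
      (((hlam (i+1)).pow 2).mul ((hlam (i+2)).pow 2)).mul (haa i)
    have hD : Continuous fun q : ↥Data =>
        (q.val.2 i)^2 * aa q.val (i+1) * aa q.val (i+2) :=
      (((hlam i).pow 2).mul (haa (i+1))).mul (haa (i+2))
    have hDne : ∀ q : ↥Data, (q.val.2 i)^2 * aa q.val (i+1) * aa q.val (i+2) ≠ 0 := by
      intro q
      obtain ⟨-, -, hpos⟩ := q.2
      have h1 := aa_pos q.2 (i+1)
      have h2 := aa_pos q.2 (i+2)
      have h3 := hpos i
      positivity
    exact Real.continuous_sqrt.comp (hN.div hD hDne)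
  · intro p
    obtain ⟨hL, hind, hpos⟩ := p.2
    have ha : ∀ i, 0 < aa p.val i := aa_pos p.2
    have hFpos : ∀ i, 0 < Fv p.val i := by
      intro i
      apply Real.sqrt_pos.mpr
      have h1 := ha i; have h2 := ha (i+1); have h3 := ha (i+2)
      have h4 := hpos i; have h5 := hpos (i+1); have h6 := hpos (i+2)
      positivity
    -- the three cyclic equations satisfied by Fv
    have hcyc : ∀ i : Fin 3, Fv p.val (i+1) * Fv p.val (i+2) * aa p.val i = (p.val.2 i)^2 := by
      intro i
      have e1 : Fv p.val (i+1) = Real.sqrt ((p.val.2 (i+2))^2 * (p.val.2 i)^2 * aa p.val (i+1) /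
          ((p.val.2 (i+1))^2 * aa p.val (i+2) * aa p.val i)) := by
        simp only [Fv, f11 i, f12 i]
      have e2 : Fv p.val (i+2) = Real.sqrt ((p.val.2 i)^2 * (p.val.2 (i+1))^2 * aa p.val (i+2) /
          ((p.val.2 (i+2))^2 * aa p.val i * aa p.val (i+1))) := by
        simp only [Fv, f21 i, f22 i]
      rw [e1, e2]
      exact key (aa p.val i) (aa p.val (i+1)) (aa p.val (i+2)) (p.val.2 i) (p.val.2 (i+1)) (p.val.2 (i+2))
        (ha i) (ha (i+1)) (ha (i+2)) (hpos i) (hpos (i+1)) (hpos (i+2))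
    refine ⟨hFpos, ?_, ?_⟩
    · intro i j k hij hjk hik
      rw [mink_smul]
      have hc0 := hcyc 0
      have hc1 := hcyc 1
      have hc2 := hcyc 2
      simp only [aa, show (0+1:Fin 3)=1 by decide, show (0+2:Fin 3)=2 by decide,
        show (1+1:Fin 3)=2 by decide, show (1+2:Fin 3)=0 by decide,
        show (2+1:Fin 3)=0 by decide, show (2+2:Fin 3)=1 by decide] at hc0 hc1 hc2
      have hs01 : mink (p.val.1 0) (p.val.1 1) = mink (p.val.1 1) (p.val.1 0) := mink_symm _ _
      have hs12 : mink (p.val.1 1) (p.val.1 2) = mink (p.val.1 2) (p.val.1 1) := mink_symm _ _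
      have hs20 : mink (p.val.1 2) (p.val.1 0) = mink (p.val.1 0) (p.val.1 2) := mink_symm _ _
      have h6 : ∀ i j k : Fin 3, i ≠ j → j ≠ k → i ≠ k →
          (i=0∧j=1∧k=2)∨(i=0∧j=2∧k=1)∨(i=1∧j=0∧k=2)∨(i=1∧j=2∧k=0)∨(i=2∧j=0∧k=1)∨(i=2∧j=1∧k=0) := by
        decide
      rcases h6 i j k hij hjk hik with ⟨rfl,rfl,rfl⟩|⟨rfl,rfl,rfl⟩|⟨rfl,rfl,rfl⟩|⟨rfl,rfl,rfl⟩|⟨rfl,rfl,rfl⟩|⟨rfl,rfl,rfl⟩ <;>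
        first
          | linear_combination hc0
          | linear_combination hc1
          | linear_combination hc2
          | linear_combination hc0 + Fv p.val 1 * Fv p.val 2 * hs12
          | linear_combination hc1 + Fv p.val 2 * Fv p.val 0 * hs20
          | linear_combination hc2 + Fv p.val 0 * Fv p.val 1 * hs01
    · intro t ht heq
      have hteq : ∀ i : Fin 3, t (i+1) * t (i+2) * aa p.val i = (p.val.2 i)^2 := by
        intro i
        have := heq i (i+1) (i+2) (fne1 i) (fne12 i) (fne2 i)
        rw [mink_smul] at this
        simp only [aa]
        linear_combination this
      funext i
      have hti : t i = Real.sqrt ((t i)^2) := (Real.sqrt_sq (ht i).le).symm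
      rw [hti]
      simp only [Fv]
      congr 1
      rw [eq_div_iff (by have h1 := ha (i+1); have h2 := ha (i+2); have h3 := hpos i; positivity)]
      exact uni (t i) (t (i+1)) (t (i+2)) (aa p.val i) (aa p.val (i+1)) (aa p.val (i+2))
        (p.val.2 i) (p.val.2 (i+1)) (p.val.2 (i+2)) (hteq i)
        (by have h := hteq (i+1); rw [f11 i, f12 i] at h; linarith)
        (by have h := hteq (i+2); rw [f21 i, f22 i] at h; linarith)
end

section
/- (Ptolemy transformation for lambda lengths.) Let θ₀ < θ₁ < θ₂ < θ₃ < θ₀ + 2π be real numbers and let c₀, c₁, c₂, c₃ be positive reals, and set u_i = c_i·(cos θ_i, sin θ_i, 1) ∈ L⁺ for i = 0,1,2,3 (four points of the light cone whose projections to the circle at infinity occur in this cyclic order). Then the lambda lengths of the two diagonals and four sides of the decorated ideal quadrilateral satisfy λ(u₀,u₂)·λ(u₁,u₃) = λ(u₀,u₁)·λ(u₂,u₃) + λ(u₁,u₂)·λ(u₀,u₃). -/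
/-- The lambda length of two points of the light cone. -/
noncomputable def lam (u v : Fin 3 → ℝ) : ℝ := Real.sqrt (-(mink u v))

/-- The point `c • (cos θ, sin θ, 1)` of the open positive light cone. -/
noncomputable def pt (c θ : ℝ) : Fin 3 → ℝ := c • ![Real.cos θ, Real.sin θ, 1]

lemma lam_eq (c c' θ θ' : ℝ) (hc : 0 < c) (hc' : 0 < c')
    (h1 : θ ≤ θ') (h2 : θ' ≤ θ + 2 * Real.pi) :
    lam (pt c θ) (pt c' θ') =
      Real.sqrt (2 * c * c') * Real.sin ((θ' - θ) / 2) := by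
  have hsin : 0 ≤ Real.sin ((θ' - θ) / 2) := by
    apply Real.sin_nonneg_of_nonneg_of_le_pi <;> [linarith; linarith [Real.pi_pos]]
  have hm : -(mink (pt c θ) (pt c' θ')) =
      (2 * c * c') * Real.sin ((θ' - θ) / 2) ^ 2 := by
    have hcos : Real.cos (θ' - θ) = 1 - 2 * Real.sin ((θ' - θ) / 2) ^ 2 := by
      have h1 : Real.cos (θ' - θ) = 2 * Real.cos ((θ' - θ) / 2) ^ 2 - 1 := by
        rw [show θ' - θ = 2 * ((θ' - θ) / 2) by ring, Real.cos_two_mul]; norm_num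
      have h2 := Real.sin_sq_add_cos_sq ((θ' - θ) / 2)
      linarith
    have hcs : Real.cos θ * Real.cos θ' + Real.sin θ * Real.sin θ'
        = Real.cos (θ' - θ) := by
      rw [Real.cos_sub]; ring
    simp only [mink, pt, Matrix.smul_cons, smul_eq_mul, Matrix.smul_empty,
      Matrix.cons_val_zero, Matrix.cons_val_one, Matrix.head_cons,
      Matrix.cons_val_two, Matrix.tail_cons]
    linear_combination (-(c * c')) * hcs + (-(c * c')) * hcos
  rw [lam, hm, Real.sqrt_mul (by positivity), Real.sqrt_sq hsin]

/-- The Ptolemy relation for lambda lengths: for four decorated points of the light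
cone whose projections to the circle at infinity occur in cyclic order, the products
of lambda lengths of the two diagonals and of the two pairs of opposite sides of the
decorated ideal quadrilateral satisfy `ef = ac + bd`. -/
theorem ptolemy (θ c : Fin 4 → ℝ)
    (hθ01 : θ 0 < θ 1) (hθ12 : θ 1 < θ 2) (hθ23 : θ 2 < θ 3)
    (hθ30 : θ 3 < θ 0 + 2 * Real.pi) (hc : ∀ i, 0 < c i) :
    lam (pt (c 0) (θ 0)) (pt (c 2) (θ 2)) * lam (pt (c 1) (θ 1)) (pt (c 3) (θ 3)) =
      lam (pt (c 0) (θ 0)) (pt (c 1) (θ 1)) * lam (pt (c 2) (θ 2)) (pt (c 3) (θ 3)) +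
      lam (pt (c 1) (θ 1)) (pt (c 2) (θ 2)) * lam (pt (c 0) (θ 0)) (pt (c 3) (θ 3)) := by
  have h0 := hc 0; have h1 := hc 1; have h2 := hc 2; have h3 := hc 3
  rw [lam_eq _ _ _ _ h0 h2 (by linarith) (by linarith),
      lam_eq _ _ _ _ h1 h3 (by linarith) (by linarith),
      lam_eq _ _ _ _ h0 h1 (by linarith) (by linarith),
      lam_eq _ _ _ _ h2 h3 (by linarith) (by linarith),
      lam_eq _ _ _ _ h1 h2 (by linarith) (by linarith),
      lam_eq _ _ _ _ h0 h3 (by linarith) (by linarith)]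
  have hK : ∀ a b : ℝ, 0 < a → 0 < b →
      Real.sqrt (2 * a * b) = Real.sqrt 2 * Real.sqrt a * Real.sqrt b := by
    intro a b ha hb
    rw [Real.sqrt_mul (by positivity), Real.sqrt_mul (by norm_num)]
  rw [hK _ _ h0 h2, hK _ _ h1 h3, hK _ _ h0 h1, hK _ _ h2 h3, hK _ _ h1 h2, hK _ _ h0 h3]
  have hsin : Real.sin ((θ 2 - θ 0) / 2) * Real.sin ((θ 3 - θ 1) / 2) =
      Real.sin ((θ 1 - θ 0) / 2) * Real.sin ((θ 3 - θ 2) / 2) +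
      Real.sin ((θ 2 - θ 1) / 2) * Real.sin ((θ 3 - θ 0) / 2) := by
    have e : ∀ x y : ℝ, Real.sin ((x - y) / 2) =
        Real.sin (x / 2) * Real.cos (y / 2) - Real.cos (x / 2) * Real.sin (y / 2) := by
      intro x y
      rw [show (x - y) / 2 = x / 2 - y / 2 by ring, Real.sin_sub]
    simp only [e]
    nlinarith [Real.sin_sq_add_cos_sq (θ 0 / 2), Real.sin_sq_add_cos_sq (θ 1 / 2),
      Real.sin_sq_add_cos_sq (θ 2 / 2), Real.sin_sq_add_cos_sq (θ 3 / 2)]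
  linear_combination (Real.sqrt 2 * Real.sqrt 2 * Real.sqrt (c 0) * Real.sqrt (c 1) *
    Real.sqrt (c 2) * Real.sqrt (c 3)) * hsin
end

section
/- (Ptolemy invariance of the Weil–Petersson two-form, as an exterior-algebra identity.) Let V be a vector space over ℝ, let α, β, γ, δ, ε ∈ V, let a, b, c, d, e be positive reals, and set φ = (ac+bd)⁻¹·(ac·(α+γ) + bd·(β+δ)) − ε ∈ V. Then in the exterior algebra of V, ω(α,β,ε) + ω(γ,δ,ε) = ω(β,γ,φ) + ω(δ,α,φ), where ω(x,y,z) = x∧y + y∧z + z∧x. -/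
open ExteriorAlgebra

/-- Ptolemy invariance of the Weil–Petersson two-form, as an identity in the exterior
algebra: with `ω x y z = x∧y + y∧z + z∧x` and
`φ = (ac+bd)⁻¹ • (ac • (α+γ) + bd • (β+δ)) - ε` (which encodes `d ln f` when
`ef = ac + bd`), one has `ω α β ε + ω γ δ ε = ω β γ φ + ω δ α φ`. -/
theorem ptolemy_invariant_two_form {V : Type*} [AddCommGroup V] [Module ℝ V]
    (α β γ δ ε : V) (a b c d e : ℝ)
    (ha : 0 < a) (hb : 0 < b) (hc : 0 < c) (hd : 0 < d) (he : 0 < e)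
    (φ : V) (hφ : φ = (a * c + b * d)⁻¹ • ((a * c) • (α + γ) + (b * d) • (β + δ)) - ε)
    (ω : V → V → V → ExteriorAlgebra ℝ V)
    (hω : ∀ x y z : V, ω x y z =
      ι ℝ x * ι ℝ y + ι ℝ y * ι ℝ z + ι ℝ z * ι ℝ x) :
    ω α β ε + ω γ δ ε = ω β γ φ + ω δ α φ := by
  have hpos : (0:ℝ) < a * c + b * d := by positivity
  set p : ℝ := (a * c + b * d)⁻¹ * (a * c) with hp
  have hq : (a * c + b * d)⁻¹ * (b * d) = 1 - p := by
    rw [hp]; field_simp; ring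
  have hφ' : φ = p • α + p • γ + (1 - p) • β + (1 - p) • δ - ε := by
    rw [hφ, ← hq, hp]; module
  have hsw : ∀ x y : V, ι ℝ y * ι ℝ x = -(ι ℝ x * ι ℝ y) := fun x y =>
    eq_neg_of_add_eq_zero_left (ι_add_mul_swap y x)
  rw [hφ']
  simp only [hω, map_add, map_sub, map_smul, mul_add, add_mul, sub_mul, mul_sub,
    smul_mul_assoc, mul_smul_comm, smul_smul]
  simp only [hsw β α, hsw γ α, hsw δ α, hsw γ β, hsw δ β, hsw δ γ,
    hsw ε α, hsw ε β, hsw ε γ, hsw ε δ, ι_sq_zero]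
  module
end

section
/- Let A and B be dense subsets of the circle S¹ and let f : A → B be a bijection that preserves strict circular betweenness, i.e. for all x, y, z ∈ A, sbtw x y z implies sbtw (f x) (f y) (f z). Then there exists a unique homeomorphism F : S¹ → S¹ such that F agrees with f on A; moreover F preserves strict circular betweenness (is orientation-preserving). -/
open Set

noncomputable section

set_option linter.unusedSectionVars false
namespace CircExt

local notation "S¹" => AddCircle (1:ℝ)

lemma hp1 : (0:ℝ) < 1 := one_pos

lemma btw_iff (u v w : ℝ) :
    Btw.btw (u : S¹) (v : S¹) (w : S¹) ↔ toIcoMod hp1 u v ≤ toIocMod hp1 u w :=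
  QuotientAddGroup.btw_coe_iff

lemma coe_eq_coe (u v : ℝ) : (u : S¹) = v ↔ ∃ n : ℤ, v - u = n := by
  rw [QuotientAddGroup.eq_iff_sub_mem]
  constructor
  · rintro h
    rcases AddSubgroup.mem_zmultiples_iff.1 h with ⟨n, hn⟩
    simp only [zsmul_eq_mul, smul_eq_mul, mul_one] at hn
    exact ⟨-n, by push_cast; linarith⟩
  · rintro ⟨n, hn⟩
    exact AddSubgroup.mem_zmultiples_iff.2
      ⟨-n, by simp only [zsmul_eq_mul, smul_eq_mul, mul_one]; push_cast; linarith⟩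

/-- L1: explicit representatives give strict betweenness. -/
lemma sbtw_of_lt {u v w : ℝ} (h1 : u < v) (h2 : v < w) (h3 : w < u + 1) :
    sbtw (u : S¹) (v : S¹) (w : S¹) := by
  rw [sbtw_iff_btw_not_btw, btw_iff, btw_iff]
  have hv : toIcoMod hp1 u v = v := (toIcoMod_eq_self hp1).2 ⟨h1.le, h2.trans h3⟩
  have hw : toIocMod hp1 u w = w := (toIocMod_eq_self hp1).2 ⟨h1.trans h2, h3.le⟩
  have hv' : toIcoMod hp1 w v = v + 1 := by
    rw [toIcoMod_eq_iff]
    exact ⟨⟨by linarith, by linarith⟩, ⟨-1, by simp⟩⟩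
  have hu' : toIocMod hp1 w u = u + 1 := by
    rw [toIocMod_eq_iff]
    exact ⟨⟨by linarith, by linarith⟩, ⟨-1, by simp⟩⟩
  rw [hv, hw, hv', hu']
  constructor
  · linarith
  · intro h; linarith

/-- coercion of toIocMod -/
lemma coe_toIocMod (a b : ℝ) : ((toIocMod hp1 a b : ℝ) : S¹) = (b : S¹) := by
  rw [coe_eq_coe]
  exact ⟨toIocDiv hp1 a b, by
    have := toIocMod_sub_self hp1 a b
    simp only [neg_smul, zsmul_eq_mul, smul_eq_mul, mul_one] at this
    linarith [this]⟩

/-- L2: strict betweenness gives explicit representatives. -/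
lemma exists_reps_of_sbtw {x y z : S¹} (h : sbtw x y z) :
    ∃ u v w : ℝ, x = (u : S¹) ∧ y = (v : S¹) ∧ z = (w : S¹) ∧ u < v ∧ v < w ∧ w < u + 1 := by
  obtain ⟨u, -, hu⟩ := AddCircle.eq_coe_Ico x
  obtain ⟨y₀, -, hy₀⟩ := AddCircle.eq_coe_Ico y
  obtain ⟨z₀, -, hz₀⟩ := AddCircle.eq_coe_Ico z
  set v := toIocMod hp1 u y₀ with hv
  set w := toIocMod hp1 u z₀ with hw
  have hyv : y = (v : S¹) := by rw [← hy₀, coe_toIocMod]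
  have hzw : z = (w : S¹) := by rw [← hz₀, coe_toIocMod]
  have hxy : x ≠ y := by rintro rfl; exact absurd h sbtw_irrefl_left
  have hyz : y ≠ z := by rintro rfl; exact absurd h sbtw_irrefl_right
  have hxz : x ≠ z := by
    rintro rfl; exact absurd h sbtw_irrefl_left_right
  have hvI := toIocMod_mem_Ioc hp1 u y₀
  have hwI := toIocMod_mem_Ioc hp1 u z₀
  have hvne : v ≠ u + 1 := by
    intro hc
    apply hxy
    rw [← hu, hyv, hc]
    rw [coe_eq_coe]; exact ⟨1, by simp⟩
  have hwne : w ≠ u + 1 := by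
    intro hc
    apply hxz
    rw [← hu, hzw, hc]
    rw [coe_eq_coe]; exact ⟨1, by simp⟩
  have hbtw := btw_of_sbtw h
  rw [← hu, hyv, hzw, btw_iff] at hbtw
  have hv2 : toIcoMod hp1 u v = v :=
    (toIcoMod_eq_self hp1).2 ⟨hvI.1.le, lt_of_le_of_ne hvI.2 hvne⟩
  have hw2 : toIocMod hp1 u w = w := (toIocMod_eq_self hp1).2 hwI
  rw [hv2, hw2] at hbtw
  have hvw : v ≠ w := by
    intro hc; exact hyz (by rw [hyv, hzw, hc])
  exact ⟨u, v, w, hu.symm, hyv, hzw, hvI.1, lt_of_le_of_ne hbtw hvw,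
    lt_of_le_of_ne hwI.2 hwne⟩

/-- L3 -/
lemma lt_iff_sbtw {a b : ℝ} (ha : a ∈ Ioo (0:ℝ) 1) (hb : b ∈ Ioo (0:ℝ) 1) :
    a < b ↔ sbtw (0 : S¹) (a : S¹) (b : S¹) := by
  have h0 : ((0:ℝ) : S¹) = 0 := by norm_num
  constructor
  · intro hab
    have := sbtw_of_lt (u := 0) ha.1 hab (by linarith [hb.2])
    rwa [h0] at this
  · intro h
    rcases lt_trichotomy a b with h' | h' | h'
    · exact h'
    · exfalso
      rw [h'] at h
      exact absurd h sbtw_irrefl_right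
    · exfalso
      have h2 := sbtw_of_lt (u := 0) hb.1 h' (by linarith [ha.2])
      rw [h0] at h2
      exact (sbtw_asymm h) (sbtw_cyclic_left h2)

/-- translations preserve strict betweenness -/
lemma sbtw_add_const {x y z : S¹} (c : S¹) (h : sbtw x y z) :
    sbtw (x + c) (y + c) (z + c) := by
  obtain ⟨u, v, w, rfl, rfl, rfl, h1, h2, h3⟩ := exists_reps_of_sbtw h
  induction c using QuotientAddGroup.induction_on with
  | H c₀ =>
    have e1 : (u : S¹) + (c₀ : S¹) = ((u + c₀ : ℝ) : S¹) := rfl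
    have e2 : (v : S¹) + (c₀ : S¹) = ((v + c₀ : ℝ) : S¹) := rfl
    have e3 : (w : S¹) + (c₀ : S¹) = ((w + c₀ : ℝ) : S¹) := rfl
    rw [e1, e2, e3]
    exact sbtw_of_lt (by linarith) (by linarith) (by linarith)

/-- distinct points: one of the two betweennesses holds strictly -/
lemma sbtw_or_sbtw {u v w : S¹} (huv : u ≠ v) (hvw : v ≠ w) (huw : u ≠ w) :
    sbtw u v w ∨ sbtw u w v := by
  rcases btw_total u v w with hb | hb
  · by_cases hb' : Btw.btw w v u
    · rcases btw_antisymm hb hb' with h | h | h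
      · exact absurd h huv
      · exact absurd h hvw
      · exact absurd h.symm huw
    · exact Or.inl (sbtw_of_btw_not_btw hb hb')
  · by_cases hb' : Btw.btw u v w
    · rcases btw_antisymm hb' hb with h | h | h
      · exact absurd h huv
      · exact absurd h hvw
      · exact absurd h.symm huw
    · right
      have := sbtw_of_btw_not_btw hb hb'
      exact sbtw_cyclic_left (sbtw_cyclic_left this)

section Ell

/-- canonical representative in `[0,1)` -/
def ell (x : S¹) : ℝ := (AddCircle.equivIco 1 0 x : ℝ)

lemma ell_mem (x : S¹) : ell x ∈ Ico (0:ℝ) 1 := by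
  have := (AddCircle.equivIco 1 0 x).2
  simpa [ell] using this

lemma coe_ell (x : S¹) : ((ell x : ℝ) : S¹) = x := by
  exact (AddCircle.equivIco 1 0).symm_apply_apply x

lemma ell_coe {t : ℝ} (ht : t ∈ Ico (0:ℝ) 1) : ell ((t : ℝ) : S¹) = t := by
  rw [ell, AddCircle.coe_equivIco_mk_apply]
  rw [div_one, mul_one, Int.fract_eq_self.2 ⟨ht.1, ht.2⟩]

lemma coe_eq_zero {t : ℝ} (ht : t ∈ Ico (0:ℝ) 1) : (t : S¹) = 0 ↔ t = 0 := by
  have := AddCircle.coe_eq_zero_iff_of_mem_Ico (p := (1:ℝ)) (a := t) ht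
  exact this

lemma ell_eq_zero_iff (x : S¹) : ell x = 0 ↔ x = 0 := by
  constructor
  · intro h
    rw [← coe_ell x, h]
    norm_num
  · rintro rfl
    have : ((0:ℝ) : S¹) = (0 : S¹) := by norm_num
    rw [← this, ell_coe ⟨le_rfl, one_pos⟩]

end Ell

/-- The monotone extension of `g` from `S` to `[0,1]`. -/
def ext (g : ℝ → ℝ) (S : Set ℝ) (x : ℝ) : ℝ :=
  sSup ({0} ∪ g '' {a ∈ S | a ≤ x})

section Ext

variable {S T : Set ℝ} {g g' : ℝ → ℝ}
variable (hS : S ⊆ Ioo 0 1) (hT : T ⊆ Ioo 0 1)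
variable (hgS : ∀ a ∈ S, g a ∈ T)
variable (hmono : ∀ a ∈ S, ∀ b ∈ S, a < b → g a < g b)
variable (hgsurj : ∀ b ∈ T, ∃ a ∈ S, g a = b)
variable (hTd : ∀ u v : ℝ, 0 ≤ u → u < v → v ≤ 1 → ∃ b ∈ T, b ∈ Ioo u v)
variable (hSd : ∀ u v : ℝ, 0 ≤ u → u < v → v ≤ 1 → ∃ a ∈ S, a ∈ Ioo u v)

include hT hgS in
lemma ext_ub {x : ℝ} : ∀ y ∈ ({0} ∪ g '' {a ∈ S | a ≤ x}), y ≤ 1 := by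
  rintro y (rfl | ⟨a, ⟨haS, -⟩, rfl⟩)
  · exact zero_le_one
  · exact (hT (hgS a haS)).2.le

include hT hgS in
lemma ext_bdd {x : ℝ} : BddAbove ({0} ∪ g '' {a ∈ S | a ≤ x}) :=
  ⟨1, fun y hy => ext_ub hT hgS y hy⟩

lemma ext_mem_zero {x : ℝ} : (0:ℝ) ∈ ({0} ∪ g '' {a ∈ S | a ≤ x}) := Or.inl rfl

include hT hgS in
lemma ext_nonneg (x : ℝ) : 0 ≤ ext g S x :=
  le_csSup (ext_bdd hT hgS) ext_mem_zero

include hT hgS in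
lemma ext_le_one (x : ℝ) : ext g S x ≤ 1 :=
  csSup_le ⟨0, ext_mem_zero⟩ (ext_ub hT hgS)

include hT hgS in
lemma ext_mono {x y : ℝ} (hxy : x ≤ y) : ext g S x ≤ ext g S y := by
  apply csSup_le_csSup (ext_bdd hT hgS) ⟨0, ext_mem_zero⟩
  rintro t (rfl | ⟨a, ⟨haS, hax⟩, rfl⟩)
  · exact Or.inl rfl
  · exact Or.inr ⟨a, ⟨haS, hax.trans hxy⟩, rfl⟩

include hT hgS hmono hgsurj hTd in
/-- the key identity: the sup from below equals the inf from above. -/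
lemma ext_eq_inf (x : ℝ) :
    ext g S x = sInf ({1} ∪ g '' {a ∈ S | x < a}) := by
  have hUne : (1:ℝ) ∈ ({1} ∪ g '' {a ∈ S | x < a}) := Or.inl rfl
  have hUbdd : BddBelow ({1} ∪ g '' {a ∈ S | x < a}) := by
    refine ⟨0, ?_⟩
    rintro y (rfl | ⟨a, ⟨haS, -⟩, rfl⟩)
    · exact zero_le_one
    · exact (hT (hgS a haS)).1.le
  apply le_antisymm
  · apply le_csInf ⟨1, hUne⟩
    rintro yu (rfl | ⟨a', ⟨ha'S, hxa'⟩, rfl⟩)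
    · exact ext_le_one hT hgS x
    · apply csSup_le ⟨0, ext_mem_zero⟩
      rintro yl (rfl | ⟨a, ⟨haS, hax⟩, rfl⟩)
      · exact (hT (hgS a' ha'S)).1.le
      · exact (hmono a haS a' ha'S (lt_of_le_of_lt hax hxa')).le
  · by_contra hcon
    push_neg at hcon
    have hlo : 0 ≤ ext g S x := ext_nonneg hT hgS x
    have hhi : sInf ({1} ∪ g '' {a ∈ S | x < a}) ≤ 1 := csInf_le hUbdd hUne
    obtain ⟨b, hbT, hb1, hb2⟩ := hTd _ _ hlo hcon hhi
    obtain ⟨a, haS, rfl⟩ := hgsurj b hbT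
    rcases le_or_gt a x with hax | hax
    · exact absurd (le_csSup (ext_bdd hT hgS) (Or.inr ⟨a, ⟨haS, hax⟩, rfl⟩)) (not_le.2 hb1)
    · exact absurd (csInf_le hUbdd (Or.inr ⟨a, ⟨haS, hax⟩, rfl⟩)) (not_le.2 hb2)

include hT hgS hmono in
lemma ext_agree {a : ℝ} (haS : a ∈ S) : ext g S a = g a := by
  apply le_antisymm
  · apply csSup_le ⟨0, ext_mem_zero⟩
    rintro y (rfl | ⟨a', ⟨ha'S, ha'⟩, rfl⟩)
    · exact (hT (hgS a haS)).1.le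
    · rcases eq_or_lt_of_le ha' with rfl | h
      · exact le_rfl
      · exact (hmono a' ha'S a haS h).le
  · exact le_csSup (ext_bdd hT hgS) (Or.inr ⟨a, ⟨haS, le_rfl⟩, rfl⟩)

include hS hT hgS hmono hgsurj hTd hSd in
lemma ext_strictMonoOn : StrictMonoOn (ext g S) (Icc 0 1) := by
  rintro x ⟨hx0, hx1⟩ y ⟨hy0, hy1⟩ hxy
  obtain ⟨a, haS, ha1, ha2⟩ := hSd x y hx0 hxy hy1
  obtain ⟨a', ha'S, ha'1, ha'2⟩ := hSd a y (hS haS).1.le ha2 hy1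
  calc ext g S x ≤ sInf ({1} ∪ g '' {c ∈ S | x < c}) := by
        rw [ext_eq_inf hT hgS hmono hgsurj hTd]
      _ ≤ g a := by
        refine csInf_le ⟨0, ?_⟩ (Or.inr ⟨a, ⟨haS, ha1⟩, rfl⟩)
        rintro t (rfl | ⟨c, ⟨hcS, -⟩, rfl⟩)
        · exact zero_le_one
        · exact (hT (hgS c hcS)).1.le
      _ < g a' := hmono a haS a' ha'S ha'1
      _ ≤ ext g S y := le_csSup (ext_bdd hT hgS) (Or.inr ⟨a', ⟨ha'S, ha'2.le⟩, rfl⟩)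

include hS in
lemma ext_zero : ext g S 0 = 0 := by
  have : {a ∈ S | a ≤ (0:ℝ)} = ∅ := by
    ext a; simp only [mem_setOf_eq, mem_empty_iff_false, iff_false, not_and, not_le]
    intro haS; exact (hS haS).1
  rw [ext, this]
  simp

include hS hT hgS hmono hgsurj hTd in
lemma ext_one : ext g S 1 = 1 := by
  rw [ext_eq_inf hT hgS hmono hgsurj hTd]
  have : {a ∈ S | (1:ℝ) < a} = ∅ := by
    ext a; simp only [mem_setOf_eq, mem_empty_iff_false, iff_false, not_and, not_lt]
    intro haS; exact (hS haS).2.le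
  rw [this]
  simp

include hS hT hgS hmono hgsurj hTd in
lemma ext_surjOn (hg'T : ∀ b ∈ T, g' b ∈ S)
    (hmono' : ∀ b ∈ T, ∀ b' ∈ T, b < b' → g' b < g' b')
    (hgg' : ∀ a ∈ S, g' (g a) = a)
    {y : ℝ} (hy : y ∈ Icc 0 1) : ext g S (ext g' T y) = y := by
  set x := ext g' T y with hx
  apply le_antisymm
  · apply csSup_le ⟨0, ext_mem_zero⟩
    rintro t (rfl | ⟨a, ⟨haS, hax⟩, rfl⟩)
    · exact hy.1
    · by_contra hlt
      push_neg at hlt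
      obtain ⟨b, hbT, hb1, hb2⟩ := hTd y (g a) hy.1 hlt (hT (hgS a haS)).2.le
      obtain ⟨a₀, ha₀S, rfl⟩ := hgsurj b hbT
      have hxa'' : x ≤ a₀ := by
        apply csSup_le ⟨0, ext_mem_zero⟩
        rintro t (rfl | ⟨b', ⟨hb'T, hb'y⟩, rfl⟩)
        · exact (hS ha₀S).1.le
        · have := hmono' b' hb'T (g a₀) hbT (lt_of_le_of_lt hb'y hb1)
          rw [hgg' a₀ ha₀S] at this
          exact this.le
      have haa : a₀ < a := by
        rcases lt_trichotomy a₀ a with h | rfl | h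
        · exact h
        · exact absurd hb2 (lt_irrefl _)
        · exact absurd (hmono a haS a₀ ha₀S h) (not_lt.2 hb2.le)
      linarith [hax.trans hxa'']
  · rw [ext_eq_inf hT hgS hmono hgsurj hTd]
    have hUne : (1:ℝ) ∈ ({1} ∪ g '' {a ∈ S | x < a}) := Or.inl rfl
    apply le_csInf ⟨1, hUne⟩
    rintro t (rfl | ⟨a, ⟨haS, hxa⟩, rfl⟩)
    · exact hy.2
    · by_contra hlt
      push_neg at hlt
      have hax : a ≤ x := by
        rw [hx, ext]
        refine le_csSup (ext_bdd hS hg'T) (Or.inr ⟨g a, ⟨hgS a haS, hlt.le⟩, hgg' a haS⟩)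
      linarith

section Phi

/-- periodic extension to `ℝ`. -/
def phi (h : ℝ → ℝ) (x : ℝ) : ℝ := ⌊x⌋ + h (Int.fract x)

variable {h : ℝ → ℝ} (h0 : h 0 = 0) (h1 : h 1 = 1) (hsm : StrictMonoOn h (Icc 0 1))

lemma fract_mem_Icc (x : ℝ) : Int.fract x ∈ Icc (0:ℝ) 1 :=
  ⟨Int.fract_nonneg x, (Int.fract_lt_one x).le⟩

include h0 hsm in
lemma phi_nonneg_fract (x : ℝ) : 0 ≤ h (Int.fract x) := by
  rcases eq_or_lt_of_le (Int.fract_nonneg x) with h' | h'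
  · rw [← h', h0]
  · rw [← h0]
    exact (hsm ⟨le_rfl, zero_le_one⟩ (fract_mem_Icc x) h').le

include h1 hsm in
lemma phi_fract_lt_one (x : ℝ) : h (Int.fract x) < 1 := by
  rw [← h1]
  exact hsm (fract_mem_Icc x) ⟨zero_le_one, le_rfl⟩ (Int.fract_lt_one x)

include h0 h1 hsm in
lemma phi_strictMono : StrictMono (phi h) := by
  intro x y hxy
  rcases eq_or_lt_of_le (Int.le_floor.2 (Int.floor_le x |>.trans hxy.le)) with hf | hf
  · have hfr : Int.fract x < Int.fract y := by
      unfold Int.fract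
      rw [← hf]
      linarith
    have := hsm (fract_mem_Icc x) (fract_mem_Icc y) hfr
    unfold phi
    rw [← hf]
    linarith
  · have h1' := phi_fract_lt_one h1 hsm x
    have h0' := phi_nonneg_fract h0 hsm y
    unfold phi
    have : (⌊x⌋ : ℝ) + 1 ≤ ⌊y⌋ := by exact_mod_cast hf
    linarith

include h0 h1 hsm in
lemma phi_surjective (hsurj : ∀ y ∈ Icc 0 1, ∃ x ∈ Icc 0 1, h x = y) :
    Function.Surjective (phi h) := by
  intro y
  obtain ⟨t, htI, hht⟩ := hsurj (Int.fract y) (fract_mem_Icc y)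
  have ht1 : t < 1 := by
    rcases eq_or_lt_of_le htI.2 with rfl | h'
    · rw [h1] at hht
      exact absurd hht.symm (ne_of_lt (Int.fract_lt_one y))
    · exact h'
  refine ⟨(⌊y⌋ : ℝ) + t, ?_⟩
  have hfr : Int.fract ((⌊y⌋ : ℝ) + t) = t := by
    rw [Int.fract_intCast_add, Int.fract_eq_self.2 ⟨htI.1, ht1⟩]
  have hfl : ⌊(⌊y⌋ : ℝ) + t⌋ = ⌊y⌋ := by
    rw [Int.floor_intCast_add, Int.floor_eq_zero_iff.mpr ⟨htI.1, ht1⟩, add_zero]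
  unfold phi
  rw [hfr, hfl, hht]
  exact Int.floor_add_fract y

lemma phi_add_one (x : ℝ) : phi h (x + 1) = phi h x + 1 := by
  unfold phi
  rw [Int.fract_add_one, Int.floor_add_one]
  push_cast
  ring

lemma phi_add_int (x : ℝ) (n : ℤ) : phi h (x + n) = phi h x + n := by
  unfold phi
  rw [Int.fract_add_intCast, Int.floor_add_intCast]
  push_cast
  ring

lemma phi_eq_of_mem {t : ℝ} (ht : t ∈ Ico (0:ℝ) 1) : phi h t = h t := by
  unfold phi
  rw [Int.fract_eq_self.2 ⟨ht.1, ht.2⟩, Int.floor_eq_zero_iff.mpr ht]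
  simp

end Phi

end Ext

section Quot

variable {Φ Ψ : ℝ → ℝ}
variable (hΦ : ∀ (x : ℝ) (n : ℤ), Φ (x + n) = Φ x + n)
variable (hΨ : ∀ (x : ℝ) (n : ℤ), Ψ (x + n) = Ψ x + n)

/-- descend a ℤ-equivariant map to the circle -/
def qmap (Φ : ℝ → ℝ) (hΦ : ∀ (x : ℝ) (n : ℤ), Φ (x + n) = Φ x + n) : S¹ → S¹ :=
  fun q => Quotient.liftOn' q (fun t => (Φ t : S¹)) (by
    intro a b hab
    have hm := QuotientAddGroup.leftRel_apply.mp hab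
    rcases AddSubgroup.mem_zmultiples_iff.mp hm with ⟨n, hn⟩
    simp only [zsmul_eq_mul, smul_eq_mul, mul_one] at hn
    have hb : b = a + n := by linarith
    show (Φ a : S¹) = (Φ b : S¹)
    rw [hb, hΦ a n, coe_eq_coe]
    exact ⟨n, by ring⟩)

@[simp] lemma qmap_coe (t : ℝ) : qmap Φ hΦ (t : S¹) = (Φ t : S¹) := rfl

include hΦ in
lemma qmap_continuous (hc : Continuous Φ) : Continuous (qmap Φ hΦ) := by
  rw [(QuotientAddGroup.isQuotientMap_mk _).continuous_iff]
  exact QuotientAddGroup.continuous_mk.comp hc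

/-- the induced homeomorphism of the circle -/
def qhomeo (hΦΨ : ∀ x, Ψ (Φ x) = x) (hΨΦ : ∀ x, Φ (Ψ x) = x)
    (hcΦ : Continuous Φ) (hcΨ : Continuous Ψ) : S¹ ≃ₜ S¹ where
  toFun := qmap Φ hΦ
  invFun := qmap Ψ hΨ
  left_inv := by
    intro q
    induction q using QuotientAddGroup.induction_on with
    | H t => rw [qmap_coe, qmap_coe, hΦΨ]
  right_inv := by
    intro q
    induction q using QuotientAddGroup.induction_on with
    | H t => rw [qmap_coe, qmap_coe, hΨΦ]
  continuous_toFun := qmap_continuous hΦ hcΦ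
  continuous_invFun := qmap_continuous hΨ hcΨ

@[simp] lemma qhomeo_coe (hΦΨ : ∀ x, Ψ (Φ x) = x) (hΨΦ : ∀ x, Φ (Ψ x) = x)
    (hcΦ : Continuous Φ) (hcΨ : Continuous Ψ) (t : ℝ) :
    qhomeo hΦ hΨ hΦΨ hΨΦ hcΦ hcΨ (t : S¹) = (Φ t : S¹) := rfl

end Quot

theorem aux (A B : Set S¹) (hA : Dense A) (hB : Dense B)
    (f : A → B) (hf : Function.Bijective f)
    (hsbtw : ∀ x y z : A, sbtw (x : S¹) (y : S¹) (z : S¹) →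
      sbtw ((f x : B) : S¹) ((f y : B) : S¹) ((f z : B) : S¹))
    (h0A : (0:S¹) ∈ A) (hf0 : ((f ⟨0, h0A⟩ : B) : S¹) = 0) :
    ∃ F : S¹ ≃ₜ S¹, (∀ a : A, F (a : S¹) = ((f a : B) : S¹)) ∧
      (∀ x y z : S¹, sbtw x y z → sbtw (F x) (F y) (F z)) := by
  classical
  set e : A ≃ B := Equiv.ofBijective f hf with he
  have h0B : (0:S¹) ∈ B := by rw [← hf0]; exact (f ⟨0, h0A⟩).2
  have he0 : e ⟨0, h0A⟩ = ⟨0, h0B⟩ := Subtype.ext hf0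
  -- total extensions
  set fA : S¹ → S¹ := fun x => if h : x ∈ A then ((f ⟨x, h⟩ : B) : S¹) else x with hfA
  set fB : S¹ → S¹ := fun y => if h : y ∈ B then ((e.symm ⟨y, h⟩ : A) : S¹) else y with hfB
  have hfA_mem : ∀ {x : S¹} (h : x ∈ A), fA x = ((f ⟨x, h⟩ : B) : S¹) := by
    intro x h; simp only [hfA, dif_pos h]
  have hfB_mem : ∀ {y : S¹} (h : y ∈ B), fB y = ((e.symm ⟨y, h⟩ : A) : S¹) := by
    intro y h; simp only [hfB, dif_pos h]
  have hfAB : ∀ {x : S¹}, x ∈ A → fA x ∈ B := by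
    intro x h; rw [hfA_mem h]; exact (f ⟨x, h⟩).2
  have hfBA : ∀ {y : S¹}, y ∈ B → fB y ∈ A := by
    intro y h; rw [hfB_mem h]; exact (e.symm ⟨y, h⟩).2
  have hfBfA : ∀ {x : S¹}, x ∈ A → fB (fA x) = x := by
    intro x h
    rw [hfA_mem h, hfB_mem (f ⟨x, h⟩).2]
    have : (⟨((f ⟨x, h⟩ : B) : S¹), (f ⟨x, h⟩).2⟩ : B) = e ⟨x, h⟩ := Subtype.ext rfl
    rw [this, Equiv.symm_apply_apply]
  have hfAfB : ∀ {y : S¹}, y ∈ B → fA (fB y) = y := by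
    intro y h
    rw [hfB_mem h, hfA_mem (e.symm ⟨y, h⟩).2]
    have : (⟨((e.symm ⟨y, h⟩ : A) : S¹), (e.symm ⟨y, h⟩).2⟩ : A) = e.symm ⟨y, h⟩ :=
      Subtype.ext rfl
    rw [this]
    have := congrArg (Subtype.val) (e.apply_symm_apply ⟨y, h⟩)
    exact this
  have hfA0 : fA 0 = 0 := by rw [hfA_mem h0A, hf0]
  have hfB0 : fB 0 = 0 := by
    rw [hfB_mem h0B, ← he0, Equiv.symm_apply_apply]
  have hfAne : ∀ {x : S¹}, x ∈ A → x ≠ 0 → fA x ≠ 0 := by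
    intro x h hx hc
    exact hx (by rw [← hfBfA h, hc, hfB0])
  have hfBne : ∀ {y : S¹}, y ∈ B → y ≠ 0 → fB y ≠ 0 := by
    intro y h hy hc
    exact hy (by rw [← hfAfB h, hc, hfA0])
  -- sbtw preservation by fA and fB
  have hsbtwA : ∀ {x y z : S¹}, x ∈ A → y ∈ A → z ∈ A → sbtw x y z →
      sbtw (fA x) (fA y) (fA z) := by
    intro x y z hx hy hz h
    rw [hfA_mem hx, hfA_mem hy, hfA_mem hz]
    exact hsbtw ⟨x, hx⟩ ⟨y, hy⟩ ⟨z, hz⟩ h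
  have hInjA : ∀ {x y : S¹}, x ∈ A → y ∈ A → fA x = fA y → x = y := by
    intro x y hx hy hxy
    rw [← hfBfA hx, ← hfBfA hy, hxy]
  have hsbtwB : ∀ {x y z : S¹}, x ∈ B → y ∈ B → z ∈ B → sbtw x y z →
      sbtw (fB x) (fB y) (fB z) := by
    intro x y z hx hy hz h
    have hxy : x ≠ y := by rintro rfl; exact absurd h sbtw_irrefl_left
    have hyz : y ≠ z := by rintro rfl; exact absurd h sbtw_irrefl_right
    have hxz : x ≠ z := by rintro rfl; exact absurd h sbtw_irrefl_left_right
    have hxy' : fB x ≠ fB y := fun hc => hxy (by rw [← hfAfB hx, ← hfAfB hy, hc])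
    have hyz' : fB y ≠ fB z := fun hc => hyz (by rw [← hfAfB hy, ← hfAfB hz, hc])
    have hxz' : fB x ≠ fB z := fun hc => hxz (by rw [← hfAfB hx, ← hfAfB hz, hc])
    rcases sbtw_or_sbtw hxy' hyz' hxz' with hgood | hbad
    · exact hgood
    · exfalso
      have := hsbtwA (hfBA hx) (hfBA hz) (hfBA hy) hbad
      rw [hfAfB hx, hfAfB hz, hfAfB hy] at this
      exact (sbtw_asymm h) (sbtw_cyclic_left this)
  -- the real sets and maps
  set S : Set ℝ := {t | t ∈ Ioo (0:ℝ) 1 ∧ (t : S¹) ∈ A} with hSdef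
  set T : Set ℝ := {t | t ∈ Ioo (0:ℝ) 1 ∧ (t : S¹) ∈ B} with hTdef
  set g : ℝ → ℝ := fun t => ell (fA (t : S¹)) with hgdef
  set g' : ℝ → ℝ := fun t => ell (fB (t : S¹)) with hg'def
  have hS : S ⊆ Ioo 0 1 := fun t ht => ht.1
  have hT : T ⊆ Ioo 0 1 := fun t ht => ht.1
  have hne0 : ∀ {t : ℝ}, t ∈ Ioo (0:ℝ) 1 → (t : S¹) ≠ 0 := by
    intro t ht hc
    rw [coe_eq_zero ⟨ht.1.le, ht.2⟩] at hc
    exact ht.1.ne' hc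
  -- generic: image facts
  have himg : ∀ {t : ℝ}, t ∈ S → (g t ∈ T ∧ ((g t : ℝ) : S¹) = fA (t : S¹)) := by
    intro t ht
    have hmem : fA (t : S¹) ∈ B := hfAB ht.2
    have hco : ((g t : ℝ) : S¹) = fA (t : S¹) := coe_ell _
    have hIco := ell_mem (fA (t : S¹))
    have hne : fA (t : S¹) ≠ 0 := hfAne ht.2 (hne0 ht.1)
    have h0 : g t ≠ 0 := by
      intro hc
      exact hne (by rw [← hco, hc]; norm_num)
    exact ⟨⟨⟨lt_of_le_of_ne hIco.1 (Ne.symm h0), hIco.2⟩, by rw [hco]; exact hmem⟩, hco⟩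
  have himg' : ∀ {t : ℝ}, t ∈ T → (g' t ∈ S ∧ ((g' t : ℝ) : S¹) = fB (t : S¹)) := by
    intro t ht
    have hmem : fB (t : S¹) ∈ A := hfBA ht.2
    have hco : ((g' t : ℝ) : S¹) = fB (t : S¹) := coe_ell _
    have hIco := ell_mem (fB (t : S¹))
    have hne : fB (t : S¹) ≠ 0 := hfBne ht.2 (hne0 ht.1)
    have h0 : g' t ≠ 0 := by
      intro hc
      exact hne (by rw [← hco, hc]; norm_num)
    exact ⟨⟨⟨lt_of_le_of_ne hIco.1 (Ne.symm h0), hIco.2⟩, by rw [hco]; exact hmem⟩, hco⟩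
  have hgS : ∀ a ∈ S, g a ∈ T := fun a ha => (himg ha).1
  have hg'T : ∀ b ∈ T, g' b ∈ S := fun b hb => (himg' hb).1
  have hgg' : ∀ a ∈ S, g' (g a) = a := by
    intro a ha
    have h1 := (himg ha).2
    have : g' (g a) = ell (fB ((g a : ℝ) : S¹)) := rfl
    rw [this, h1, hfBfA ha.2, ell_coe ⟨(hS ha).1.le, (hS ha).2⟩]
  have hg'g : ∀ b ∈ T, g (g' b) = b := by
    intro b hb
    have h1 := (himg' hb).2
    have : g (g' b) = ell (fA ((g' b : ℝ) : S¹)) := rfl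
    rw [this, h1, hfAfB hb.2, ell_coe ⟨(hT hb).1.le, (hT hb).2⟩]
  have hgsurj : ∀ b ∈ T, ∃ a ∈ S, g a = b := fun b hb => ⟨g' b, hg'T b hb, hg'g b hb⟩
  -- monotonicity
  have hmono : ∀ a ∈ S, ∀ b ∈ S, a < b → g a < g b := by
    intro a ha b hb hab
    have hs : sbtw (0 : S¹) (a : S¹) (b : S¹) := (lt_iff_sbtw ha.1 hb.1).1 hab
    have := hsbtwA h0A ha.2 hb.2 hs
    rw [hfA0, ← (himg ha).2, ← (himg hb).2] at this
    exact (lt_iff_sbtw (hT (hgS a ha)) (hT (hgS b hb))).2 this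
  have hmono' : ∀ b ∈ T, ∀ b' ∈ T, b < b' → g' b < g' b' := by
    intro a ha b hb hab
    have hs : sbtw (0 : S¹) (a : S¹) (b : S¹) := (lt_iff_sbtw ha.1 hb.1).1 hab
    have := hsbtwB h0B ha.2 hb.2 hs
    rw [hfB0, ← (himg' ha).2, ← (himg' hb).2] at this
    exact (lt_iff_sbtw (hS (hg'T a ha)) (hS (hg'T b hb))).2 this
  -- density
  have hdense : ∀ (C : Set S¹), Dense C →
      ∀ u v : ℝ, 0 ≤ u → u < v → v ≤ 1 →
        ∃ t, (t ∈ Ioo (0:ℝ) 1 ∧ (t : S¹) ∈ C) ∧ t ∈ Ioo u v := by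
    intro C hC u v hu huv hv
    have hPd : Dense ((QuotientAddGroup.mk ⁻¹' C : Set ℝ)) :=
      QuotientAddGroup.dense_preimage_mk.mpr hC
    obtain ⟨t, htC, ht⟩ := hPd.exists_mem_open (isOpen_Ioo (a := u) (b := v))
      (⟨(u+v)/2, by rw [Set.mem_Ioo]; exact ⟨by linarith, by linarith⟩⟩ : (Ioo u v).Nonempty)
    exact ⟨t, ⟨⟨lt_of_le_of_lt hu ht.1, lt_of_lt_of_le ht.2 hv⟩, htC⟩, ht⟩
  have hSd : ∀ u v : ℝ, 0 ≤ u → u < v → v ≤ 1 → ∃ a ∈ S, a ∈ Ioo u v := by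
    intro u v hu huv hv
    obtain ⟨t, h1, h2⟩ := hdense A hA u v hu huv hv
    exact ⟨t, h1, h2⟩
  have hTd : ∀ u v : ℝ, 0 ≤ u → u < v → v ≤ 1 → ∃ b ∈ T, b ∈ Ioo u v := by
    intro u v hu huv hv
    obtain ⟨t, h1, h2⟩ := hdense B hB u v hu huv hv
    exact ⟨t, h1, h2⟩
  -- the extension
  set h : ℝ → ℝ := ext g S with hhdef
  have hsm : StrictMonoOn h (Icc 0 1) := ext_strictMonoOn hS hT hgS hmono hgsurj hTd hSd
  have h0 : h 0 = 0 := ext_zero hS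
  have h1 : h 1 = 1 := ext_one hS hT hgS hmono hgsurj hTd
  have hsurj : ∀ y ∈ Icc 0 1, ∃ x ∈ Icc 0 1, h x = y := by
    intro y hy
    refine ⟨ext g' T y, ⟨ext_nonneg hS hg'T y, ext_le_one hS hg'T y⟩, ?_⟩
    exact ext_surjOn hS hT hgS hmono hgsurj hTd hg'T hmono' hgg' hy
  have hagree : ∀ t ∈ S, h t = g t := fun t ht => ext_agree hT hgS hmono ht
  -- the lift
  set Φ : ℝ → ℝ := phi h with hΦdef
  have hΦsm : StrictMono Φ := phi_strictMono h0 h1 hsm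
  have hΦsurj : Function.Surjective Φ := phi_surjective h0 h1 hsm hsurj
  set oi : ℝ ≃o ℝ := StrictMono.orderIsoOfSurjective Φ hΦsm hΦsurj with hoi
  have hoiΦ : (oi : ℝ → ℝ) = Φ := StrictMono.coe_orderIsoOfSurjective Φ hΦsm hΦsurj
  set Ψ : ℝ → ℝ := ⇑oi.symm with hΨdef
  have hΨΦ : ∀ x, Ψ (Φ x) = x := by
    intro x
    rw [hΨdef, ← hoiΦ]
    exact oi.symm_apply_apply x
  have hΦΨ : ∀ x, Φ (Ψ x) = x := by
    intro x
    rw [hΨdef, ← hoiΦ]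
    exact oi.apply_symm_apply x
  have hΦadd : ∀ (x : ℝ) (n : ℤ), Φ (x + n) = Φ x + n := fun x n => phi_add_int x n
  have hΨadd : ∀ (x : ℝ) (n : ℤ), Ψ (x + n) = Ψ x + n := by
    intro x n
    apply hΦsm.injective
    rw [hΦΨ, hΦadd, hΦΨ]
  have hcΦ : Continuous Φ := by
    rw [← hoiΦ]
    exact (OrderIso.toHomeomorph oi).continuous
  have hcΨ : Continuous Ψ := (OrderIso.toHomeomorph oi).symm.continuous
  refine ⟨qhomeo hΦadd hΨadd hΨΦ hΦΨ hcΦ hcΨ, ?_, ?_⟩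
  · -- agreement
    intro a
    rcases eq_or_ne (a : S¹) 0 with hz | hz
    · have ha0 : a = ⟨0, h0A⟩ := Subtype.ext hz
      rw [hz]
      have : ((0:ℝ) : S¹) = (0 : S¹) := by norm_num
      rw [← this, qhomeo_coe]
      have hΦ0 : Φ 0 = 0 := by
        rw [hΦdef, phi_eq_of_mem ⟨le_rfl, one_pos⟩, h0]
      rw [hΦ0, this, ha0, hf0]
    · set t : ℝ := ell (a : S¹) with ht
      have htI : t ∈ Ico (0:ℝ) 1 := ell_mem _
      have ht0 : t ≠ 0 := fun hc => hz (by rw [← coe_ell (a : S¹), ← ht, hc]; norm_num)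
      have htIoo : t ∈ Ioo (0:ℝ) 1 := ⟨lt_of_le_of_ne htI.1 (Ne.symm ht0), htI.2⟩
      have hco : ((t : ℝ) : S¹) = (a : S¹) := coe_ell _
      have htS : t ∈ S := ⟨htIoo, by rw [hco]; exact a.2⟩
      have : ((a : S¹)) = ((t : ℝ) : S¹) := hco.symm
      rw [this, qhomeo_coe]
      have hΦt : Φ t = g t := by
        rw [hΦdef, phi_eq_of_mem htI]
        exact hagree t htS
      rw [hΦt, (himg htS).2, hco, hfA_mem a.2]
  · -- sbtw preservation
    intro x y z hs
    obtain ⟨u, v, w, rfl, rfl, rfl, h1', h2', h3'⟩ := exists_reps_of_sbtw hs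
    rw [qhomeo_coe, qhomeo_coe, qhomeo_coe]
    have hw : Φ w < Φ u + 1 := by
      have := hΦsm (show w < u + (1:ℤ) by push_cast; linarith)
      rwa [hΦadd u 1, Int.cast_one] at this
    exact sbtw_of_lt (hΦsm h1') (hΦsm h2') hw

end CircExt

open CircExt in
/-- Combinatorial rigidity / interpolation of circle homeomorphisms: a bijection
between dense subsets of the circle `S¹ = ℝ/ℤ` preserving strict circular betweenness
extends to a unique self-homeomorphism of the circle, and this extension preserves
strict circular betweenness (is orientation-preserving). -/
theorem dense_circular_order_bijection_extends_to_homeomorph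
    (A B : Set (AddCircle (1 : ℝ))) (hA : Dense A) (hB : Dense B)
    (f : A → B) (hf : Function.Bijective f)
    (hsbtw : ∀ x y z : A,
      sbtw (x : AddCircle (1 : ℝ)) (y : AddCircle (1 : ℝ)) (z : AddCircle (1 : ℝ)) →
      sbtw ((f x : B) : AddCircle (1 : ℝ)) ((f y : B) : AddCircle (1 : ℝ))
        ((f z : B) : AddCircle (1 : ℝ))) :
    ∃ F : AddCircle (1 : ℝ) ≃ₜ AddCircle (1 : ℝ),
      (∀ a : A, F (a : AddCircle (1 : ℝ)) = ((f a : B) : AddCircle (1 : ℝ))) ∧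
      (∀ x y z : AddCircle (1 : ℝ), sbtw x y z → sbtw (F x) (F y) (F z)) ∧
      (∀ G : AddCircle (1 : ℝ) ≃ₜ AddCircle (1 : ℝ),
        (∀ a : A, G (a : AddCircle (1 : ℝ)) = ((f a : B) : AddCircle (1 : ℝ))) → G = F) := by
  classical
  obtain ⟨α, hαA⟩ := hA.nonempty
  set β : AddCircle (1:ℝ) := ((f ⟨α, hαA⟩ : B) : AddCircle (1:ℝ)) with hβ
  set A' : Set (AddCircle (1:ℝ)) := (fun x => x + α) ⁻¹' A with hA'def
  set B' : Set (AddCircle (1:ℝ)) := (fun x => x + β) ⁻¹' B with hB'def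
  have hA' : Dense A' := hA.preimage (Homeomorph.addRight α).isOpenMap
  have hB' : Dense B' := hB.preimage (Homeomorph.addRight β).isOpenMap
  have memA' : ∀ {x : AddCircle (1:ℝ)}, x ∈ A' → x + α ∈ A := fun h => h
  have memB' : ∀ {x : AddCircle (1:ℝ)}, x ∈ B' → x + β ∈ B := fun h => h
  set eA : A' ≃ A :=
    { toFun := fun x => ⟨(x : AddCircle (1:ℝ)) + α, x.2⟩
      invFun := fun a => ⟨(a : AddCircle (1:ℝ)) - α, by
        show ((a : AddCircle (1:ℝ)) - α) + α ∈ A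
        rw [sub_add_cancel]; exact a.2⟩
      left_inv := fun x => Subtype.ext (add_sub_cancel_right _ _)
      right_inv := fun a => Subtype.ext (sub_add_cancel _ _) } with heA
  set eB : B' ≃ B :=
    { toFun := fun x => ⟨(x : AddCircle (1:ℝ)) + β, x.2⟩
      invFun := fun b => ⟨(b : AddCircle (1:ℝ)) - β, by
        show ((b : AddCircle (1:ℝ)) - β) + β ∈ B
        rw [sub_add_cancel]; exact b.2⟩
      left_inv := fun x => Subtype.ext (add_sub_cancel_right _ _)
      right_inv := fun b => Subtype.ext (sub_add_cancel _ _) } with heB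
  set E : A' ≃ B' := (eA.trans (Equiv.ofBijective f hf)).trans eB.symm with hE
  have hEco : ∀ x : A', ((E x : B') : AddCircle (1:ℝ)) =
      ((f (eA x) : B) : AddCircle (1:ℝ)) - β := fun x => rfl
  have h0A' : (0 : AddCircle (1:ℝ)) ∈ A' := by
    show (0 : AddCircle (1:ℝ)) + α ∈ A
    rw [zero_add]; exact hαA
  have hE0 : ((E ⟨0, h0A'⟩ : B') : AddCircle (1:ℝ)) = 0 := by
    rw [hEco]
    have : eA ⟨0, h0A'⟩ = ⟨α, hαA⟩ := Subtype.ext (zero_add α)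
    rw [this, ← hβ, sub_self]
  have hsbtw' : ∀ x y z : A', sbtw (x : AddCircle (1:ℝ)) (y : AddCircle (1:ℝ))
      (z : AddCircle (1:ℝ)) → sbtw ((E x : B') : AddCircle (1:ℝ))
      ((E y : B') : AddCircle (1:ℝ)) ((E z : B') : AddCircle (1:ℝ)) := by
    intro x y z h
    have h1 := sbtw_add_const α h
    have h2 := hsbtw (eA x) (eA y) (eA z) h1
    have h3 := sbtw_add_const (-β) h2
    rw [hEco, hEco, hEco, sub_eq_add_neg, sub_eq_add_neg, sub_eq_add_neg]
    exact h3
  obtain ⟨F', hagr', hpres'⟩ := aux A' B' hA' hB' E E.bijective hsbtw' h0A' hE0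
  set F : AddCircle (1:ℝ) ≃ₜ AddCircle (1:ℝ) :=
    (Homeomorph.subRight α).trans (F'.trans (Homeomorph.addRight β)) with hF
  have hFval : ∀ x : AddCircle (1:ℝ), F x = F' (x - α) + β := fun x => rfl
  have hFa : ∀ a : A, F (a : AddCircle (1:ℝ)) = ((f a : B) : AddCircle (1:ℝ)) := by
    intro a
    have hmem : ((a : AddCircle (1:ℝ)) - α) ∈ A' := by
      show ((a : AddCircle (1:ℝ)) - α) + α ∈ A
      rw [sub_add_cancel]; exact a.2
    have h1 := hagr' ⟨(a : AddCircle (1:ℝ)) - α, hmem⟩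
    have h2 : eA ⟨(a : AddCircle (1:ℝ)) - α, hmem⟩ = a := Subtype.ext (sub_add_cancel _ _)
    rw [hFval, h1, hEco, h2, sub_add_cancel]
  refine ⟨F, hFa, ?_, ?_⟩
  · intro x y z h
    have h1 := sbtw_add_const (-α) h
    rw [← sub_eq_add_neg, ← sub_eq_add_neg, ← sub_eq_add_neg] at h1
    have h2 := hpres' _ _ _ h1
    have h3 := sbtw_add_const β h2
    rw [hFval, hFval, hFval]
    exact h3
  · intro G hG
    have hEqOn : Set.EqOn (⇑G) (⇑F) A := by
      intro x hx
      rw [hG ⟨x, hx⟩, hFa ⟨x, hx⟩]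
    have : ⇑G = ⇑F := Continuous.ext_on hA G.continuous F.continuous hEqOn
    exact Homeomorph.ext (fun x => congrFun this x)

end
end

section
/- Every element of PSL₂(ℤ) can be written uniquely in exactly one of the following forms: (i) the identity; (ii) a nonempty product of elements of {U, T} (an element of the free semigroup generated by U and T), or a nonempty product of elements of {U⁻¹, T⁻¹}; (iii) S times an element of the form (i) or (ii). That is, the map sending a pair (σ, w), where σ ∈ {1, S} and w is either the empty word or a nonempty word in the alphabet {U, T} or a nonempty word in the alphabet {U⁻¹, T⁻¹}, to the product σ·(product of the letters of w) in PSL₂(ℤ), is a bijection onto PSL₂(ℤ). -/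
/-- `SL(2,ℤ)`. -/
abbrev SL2Z := Matrix.SpecialLinearGroup (Fin 2) ℤ

/-- `PSL(2,ℤ)`, the quotient of `SL(2,ℤ)` by its center `{±I}`. -/
abbrev PSL2Z := SL2Z ⧸ Subgroup.center SL2Z

/-- The image of `S = [[0,-1],[1,0]]` in `PSL(2,ℤ)`. -/
def Sp : PSL2Z := QuotientGroup.mk ⟨!![0, -1; 1, 0], by norm_num [Matrix.det_fin_two_of]⟩

/-- The image of `T = [[1,1],[0,1]]` in `PSL(2,ℤ)`. -/
def Tp : PSL2Z := QuotientGroup.mk ⟨!![1, 1; 0, 1], by norm_num [Matrix.det_fin_two_of]⟩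

/-- The image of `U = [[1,0],[1,1]]` in `PSL(2,ℤ)`. -/
def Up : PSL2Z := QuotientGroup.mk ⟨!![1, 0; 1, 1], by norm_num [Matrix.det_fin_two_of]⟩

/-- A letter of one of the two alphabets `{U, T}` (when `sgn = true`) or
`{U⁻¹, T⁻¹}` (when `sgn = false`); `b = true` selects `U^{±1}`, `b = false`
selects `T^{±1}`. -/
def letter (sgn b : Bool) : PSL2Z :=
  if sgn then (if b then Up else Tp) else (if b then Up⁻¹ else Tp⁻¹)

/-- The product in `PSL(2,ℤ)` of a word in the alphabet `{U, T}` (if `sgn = true`)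
or in the alphabet `{U⁻¹, T⁻¹}` (if `sgn = false`). -/
def wordProd (sgn : Bool) (l : List Bool) : PSL2Z := (l.map (letter sgn)).prod

/-- The map sending a pair `(σ, w)` — where `σ ∈ {1, S}` (encoded by a `Bool`) and `w`
is either the empty word (`none`) or a nonempty word in the alphabet `{U, T}` or a
nonempty word in the alphabet `{U⁻¹, T⁻¹}` — to the product `σ · (product of the
letters of w)` in `PSL(2,ℤ)`. -/
def canonicalForm : Bool × Option (Bool × {l : List Bool // l ≠ []}) → PSL2Z :=
  fun p =>
    (if p.1 then Sp else 1) *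
      (match p.2 with
        | none => 1
        | some (sgn, l) => wordProd sgn l.val)


namespace CF
def Sm : SL2Z := ⟨!![0,-1;1,0], by norm_num [Matrix.det_fin_two_of]⟩
def Smi : SL2Z := ⟨!![0,1;-1,0], by norm_num [Matrix.det_fin_two_of]⟩
def Tm : SL2Z := ⟨!![1,1;0,1], by norm_num [Matrix.det_fin_two_of]⟩
def Um : SL2Z := ⟨!![1,0;1,1], by norm_num [Matrix.det_fin_two_of]⟩
def Tmi : SL2Z := ⟨!![1,-1;0,1], by norm_num [Matrix.det_fin_two_of]⟩
def Umi : SL2Z := ⟨!![1,0;-1,1], by norm_num [Matrix.det_fin_two_of]⟩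
def negI : SL2Z := ⟨!![-1,0;0,-1], by norm_num [Matrix.det_fin_two_of]⟩

lemma mul_entry (A B : SL2Z) (i j : Fin 2) :
    (A*B).1 i j = A.1 i 0 * B.1 0 j + A.1 i 1 * B.1 1 j := by
  simp [Matrix.SpecialLinearGroup.coe_mul, Matrix.mul_apply, Fin.sum_univ_two]

lemma slext {A B : SL2Z} (h00 : A.1 0 0 = B.1 0 0) (h01 : A.1 0 1 = B.1 0 1)
    (h10 : A.1 1 0 = B.1 1 0) (h11 : A.1 1 1 = B.1 1 1) : A = B := by
  apply Subtype.ext; ext i j; fin_cases i <;> fin_cases j <;> assumption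

lemma detA (A : SL2Z) : A.1 0 0 * A.1 1 1 - A.1 0 1 * A.1 1 0 = 1 := by
  have := A.2; rwa [Matrix.det_fin_two] at this

@[simp] lemma Sm00 : Sm.1 0 0 = 0 := rfl
@[simp] lemma Sm01 : Sm.1 0 1 = -1 := rfl
@[simp] lemma Sm10 : Sm.1 1 0 = 1 := rfl
@[simp] lemma Sm11 : Sm.1 1 1 = 0 := rfl
@[simp] lemma Um00 : Um.1 0 0 = 1 := rfl
@[simp] lemma Um01 : Um.1 0 1 = 0 := rfl
@[simp] lemma Um10 : Um.1 1 0 = 1 := rfl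
@[simp] lemma Um11 : Um.1 1 1 = 1 := rfl
@[simp] lemma Tm00 : Tm.1 0 0 = 1 := rfl
@[simp] lemma Tm01 : Tm.1 0 1 = 1 := rfl
@[simp] lemma Tm10 : Tm.1 1 0 = 0 := rfl
@[simp] lemma Tm11 : Tm.1 1 1 = 1 := rfl
@[simp] lemma one00 : (1 : SL2Z).1 0 0 = 1 := rfl
@[simp] lemma one01 : (1 : SL2Z).1 0 1 = 0 := rfl
@[simp] lemma one10 : (1 : SL2Z).1 1 0 = 0 := rfl
@[simp] lemma one11 : (1 : SL2Z).1 1 1 = 1 := rfl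

lemma Um_Umi : Um * Umi = 1 := by apply slext <;> simp [mul_entry] <;> rfl
lemma Tm_Tmi : Tm * Tmi = 1 := by apply slext <;> simp [mul_entry] <;> rfl
lemma Sm_Smi : Sm * Smi = 1 := by apply slext <;> simp [mul_entry] <;> rfl

def posM (A : SL2Z) : Prop := 0 ≤ A.1 0 0 ∧ 0 ≤ A.1 0 1 ∧ 0 ≤ A.1 1 0 ∧ 0 ≤ A.1 1 1

def pletter (b : Bool) : SL2Z := if b then Um else Tm
def pw (l : List Bool) : SL2Z := (l.map pletter).prod

@[simp] lemma pw_nil : pw [] = 1 := rfl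
@[simp] lemma pw_cons (b : Bool) (l : List Bool) : pw (b::l) = pletter b * pw l := by
  simp [pw]

lemma pw_append (l₁ l₂ : List Bool) : pw (l₁ ++ l₂) = pw l₁ * pw l₂ := by
  simp [pw]

lemma pw_bounds (l : List Bool) :
    1 ≤ (pw l).1 0 0 ∧ 0 ≤ (pw l).1 0 1 ∧ 0 ≤ (pw l).1 1 0 ∧ 1 ≤ (pw l).1 1 1 := by
  induction l with
  | nil => simp
  | cons b t ih =>
    obtain ⟨h1, h2, h3, h4⟩ := ih
    cases b <;> simp [pletter, mul_entry] <;> constructor <;> try constructor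
    all_goals first | linarith | (constructor <;> linarith)

lemma pw_off (l : List Bool) (h : l ≠ []) : 1 ≤ (pw l).1 0 1 + (pw l).1 1 0 := by
  match l with
  | b :: t =>
    obtain ⟨h1, h2, h3, h4⟩ := pw_bounds t
    cases b <;> simp [pletter, mul_entry] <;> linarith

lemma pw_pos (l : List Bool) : posM (pw l) := by
  obtain ⟨h1, h2, h3, h4⟩ := pw_bounds l
  exact ⟨by linarith, h2, h3, by linarith⟩

lemma diag_pos {A : SL2Z} (h : posM A) : 1 ≤ A.1 0 0 ∧ 1 ≤ A.1 1 1 := by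
  obtain ⟨ha, hb, hc, hd⟩ := h
  have hdet := detA A
  have hbc : 0 ≤ A.1 0 1 * A.1 1 0 := mul_nonneg hb hc
  have had : 1 ≤ A.1 0 0 * A.1 1 1 := by linarith
  constructor
  · rcases ha.lt_or_eq with h | h
    · exact h
    · exfalso; rw [← h] at had; simp at had
  · rcases hd.lt_or_eq with h | h
    · exact h
    · exfalso; rw [← h] at had; simp at had

lemma tri (A : SL2Z) (h : posM A) :
    A = 1 ∨ (A.1 0 0 ≤ A.1 1 0 ∧ A.1 0 1 ≤ A.1 1 1)
      ∨ (A.1 1 0 ≤ A.1 0 0 ∧ A.1 1 1 ≤ A.1 0 1) := by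
  obtain ⟨ha, hb, hc, hd⟩ := h
  have hdet := detA A
  rcases le_or_gt (A.1 0 0) (A.1 1 0) with h1 | h1
  · rcases le_or_gt (A.1 0 1) (A.1 1 1) with h2 | h2
    · exact Or.inr (Or.inl ⟨h1, h2⟩)
    · exfalso
      have : (A.1 1 1 + 1) * (A.1 0 0) ≤ A.1 0 1 * A.1 1 0 :=
        mul_le_mul (by omega) h1 ha (by omega)
      nlinarith
  · rcases lt_or_ge (A.1 0 1) (A.1 1 1) with h2 | h2
    · left
      have key : (A.1 1 0 + 1) * (A.1 0 1 + 1) ≤ A.1 0 0 * A.1 1 1 :=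
        mul_le_mul (by omega) (by omega) (by omega) (by omega)
      have hb0 : A.1 0 1 = 0 := by nlinarith
      have hc0 : A.1 1 0 = 0 := by nlinarith
      have had : A.1 0 0 * A.1 1 1 = 1 := by rw [hb0] at hdet; linarith
      rcases Int.eq_one_or_neg_one_of_mul_eq_one' had with ⟨e1, e2⟩ | ⟨e1, e2⟩
      · exact slext e1 (by simp [hb0]) (by simp [hc0]) e2
      · omega
    · exact Or.inr (Or.inr ⟨by omega, h2⟩)

lemma pos_exists_aux : ∀ n : ℕ, ∀ A : SL2Z, posM A →
    (A.1 0 0 + A.1 0 1 + A.1 1 0 + A.1 1 1).toNat ≤ n → ∃ l, pw l = A := by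
  intro n
  induction n with
  | zero =>
    intro A hA hm
    exfalso
    obtain ⟨d1, d2⟩ := diag_pos hA
    obtain ⟨_, hb, hc, _⟩ := hA
    omega
  | succ n ih =>
    intro A hA hm
    obtain ⟨d1, d2⟩ := diag_pos hA
    obtain ⟨ha, hb, hc, hd⟩ := hA
    rcases tri A ⟨ha, hb, hc, hd⟩ with h1 | ⟨h1, h2⟩ | ⟨h1, h2⟩
    · exact ⟨[], h1.symm⟩
    · -- U-case: A = Um * (Umi * A)
      set B := Umi * A with hB
      have e00 : B.1 0 0 = A.1 0 0 := by
        show (Umi * A).1 0 0 = _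
        rw [mul_entry]; show 1 * A.1 0 0 + 0 * A.1 1 0 = _; ring
      have e01 : B.1 0 1 = A.1 0 1 := by
        show (Umi * A).1 0 1 = _
        rw [mul_entry]; show 1 * A.1 0 1 + 0 * A.1 1 1 = _; ring
      have e10 : B.1 1 0 = A.1 1 0 - A.1 0 0 := by
        show (Umi * A).1 1 0 = _
        rw [mul_entry]; show (-1) * A.1 0 0 + 1 * A.1 1 0 = _; ring
      have e11 : B.1 1 1 = A.1 1 1 - A.1 0 1 := by
        show (Umi * A).1 1 1 = _
        rw [mul_entry]; show (-1) * A.1 0 1 + 1 * A.1 1 1 = _; ring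
      have hBpos : posM B :=
        ⟨by rw [e00]; omega, by rw [e01]; omega, by rw [e10]; omega, by rw [e11]; omega⟩
      obtain ⟨l, hl⟩ := ih B hBpos (by rw [e00, e01, e10, e11]; omega)
      refine ⟨true :: l, ?_⟩
      rw [pw_cons, hl]
      show Um * (Umi * A) = A
      rw [← mul_assoc, Um_Umi, one_mul]
    · set B := Tmi * A with hB
      have e00 : B.1 0 0 = A.1 0 0 - A.1 1 0 := by
        show (Tmi * A).1 0 0 = _
        rw [mul_entry]; show 1 * A.1 0 0 + (-1) * A.1 1 0 = _; ring
      have e01 : B.1 0 1 = A.1 0 1 - A.1 1 1 := by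
        show (Tmi * A).1 0 1 = _
        rw [mul_entry]; show 1 * A.1 0 1 + (-1) * A.1 1 1 = _; ring
      have e10 : B.1 1 0 = A.1 1 0 := by
        show (Tmi * A).1 1 0 = _
        rw [mul_entry]; show 0 * A.1 0 0 + 1 * A.1 1 0 = _; ring
      have e11 : B.1 1 1 = A.1 1 1 := by
        show (Tmi * A).1 1 1 = _
        rw [mul_entry]; show 0 * A.1 0 1 + 1 * A.1 1 1 = _; ring
      have hBpos : posM B :=
        ⟨by rw [e00]; omega, by rw [e01]; omega, by rw [e10]; omega, by rw [e11]; omega⟩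
      obtain ⟨l, hl⟩ := ih B hBpos (by rw [e00, e01, e10, e11]; omega)
      refine ⟨false :: l, ?_⟩
      rw [pw_cons, hl]
      show Tm * (Tmi * A) = A
      rw [← mul_assoc, Tm_Tmi, one_mul]

lemma pos_exists (A : SL2Z) (h : posM A) : ∃ l, pw l = A :=
  pos_exists_aux (A.1 0 0 + A.1 0 1 + A.1 1 0 + A.1 1 1).toNat A h le_rfl

lemma head_determined {b b' : Bool} {t t' : List Bool}
    (h : pw (b :: t) = pw (b' :: t')) : b = b' := by
  by_contra hne
  -- wlog-style: handle both asymmetric cases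
  have key : ∀ (u u' : List Bool), pw (true :: u) = pw (false :: u') → False := by
    intro u u' he
    obtain ⟨a1, a2, a3, a4⟩ := pw_bounds u
    obtain ⟨c1, c2, c3, c4⟩ := pw_bounds u'
    -- entries of Um * pw u : row0 = row0, row1 = row0+row1
    -- entries of Tm * pw u' : row0 = row0+row1, row1 = row1
    have e1 : (pw (true :: u)).1 0 0 = (pw u).1 0 0 := by
      rw [pw_cons]; show (Um * pw u).1 0 0 = _
      rw [mul_entry]; show 1 * (pw u).1 0 0 + 0 * (pw u).1 1 0 = _; ring
    have e2 : (pw (true :: u)).1 1 0 = (pw u).1 0 0 + (pw u).1 1 0 := by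
      rw [pw_cons]; show (Um * pw u).1 1 0 = _
      rw [mul_entry]; show 1 * (pw u).1 0 0 + 1 * (pw u).1 1 0 = _; ring
    have f1 : (pw (false :: u')).1 0 0 = (pw u').1 0 0 + (pw u').1 1 0 := by
      rw [pw_cons]; show (Tm * pw u').1 0 0 = _
      rw [mul_entry]; show 1 * (pw u').1 0 0 + 1 * (pw u').1 1 0 = _; ring
    have f2 : (pw (false :: u')).1 1 0 = (pw u').1 1 0 := by
      rw [pw_cons]; show (Tm * pw u').1 1 0 = _
      rw [mul_entry]; show 0 * (pw u').1 0 0 + 1 * (pw u').1 1 0 = _; ring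
    have g1 : (pw (true :: u)).1 0 0 = (pw (false :: u')).1 0 0 := by rw [he]
    have g2 : (pw (true :: u)).1 1 0 = (pw (false :: u')).1 1 0 := by rw [he]
    rw [e1, f1] at g1
    rw [e2, f2] at g2
    omega
  cases b <;> cases b'
  · exact hne rfl
  · exact key t' t h.symm
  · exact key t t' h
  · exact hne rfl

lemma pw_injective : ∀ l₁ l₂ : List Bool, pw l₁ = pw l₂ → l₁ = l₂ := by
  intro l₁
  induction l₁ with
  | nil =>
    intro l₂ h
    cases l₂ with
    | nil => rfl
    | cons b t =>
      exfalso
      have := pw_off (b :: t) (by simp)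
      rw [← h] at this
      simp at this
  | cons b t ih =>
    intro l₂ h
    cases l₂ with
    | nil =>
      exfalso
      have := pw_off (b :: t) (by simp)
      rw [h] at this
      simp at this
    | cons b' t' =>
      have hb : b = b' := head_determined h
      subst hb
      rw [pw_cons, pw_cons] at h
      have := mul_left_cancel h
      rw [ih t' this]

def nletter (b : Bool) : SL2Z := if b then Umi else Tmi
def nw (l : List Bool) : SL2Z := (l.map nletter).prod

@[simp] lemma nw_nil : nw [] = 1 := rfl
@[simp] lemma nw_cons (b : Bool) (l : List Bool) : nw (b::l) = nletter b * nw l := by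
  simp [nw]

lemma Um_inv : Um⁻¹ = Umi := inv_eq_of_mul_eq_one_right Um_Umi
lemma Tm_inv : Tm⁻¹ = Tmi := inv_eq_of_mul_eq_one_right Tm_Tmi
lemma Sm_inv : Sm⁻¹ = Smi := inv_eq_of_mul_eq_one_right Sm_Smi

lemma nletter_eq (b : Bool) : nletter b = (pletter b)⁻¹ := by
  cases b <;> simp [nletter, pletter, Um_inv, Tm_inv]

lemma nw_eq (l : List Bool) : nw l = (pw l.reverse)⁻¹ := by
  induction l with
  | nil => simp
  | cons b t ih =>
    have hb : pw [b] = pletter b := by simp [pw]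
    rw [nw_cons, ih, nletter_eq, List.reverse_cons, pw_append, hb, mul_inv_rev]

lemma nw_injective (l₁ l₂ : List Bool) (h : nw l₁ = nw l₂) : l₁ = l₂ := by
  rw [nw_eq, nw_eq, inv_inj] at h
  have := pw_injective _ _ h
  exact List.reverse_injective this

@[simp] lemma negI00 : negI.1 0 0 = -1 := rfl
@[simp] lemma negI01 : negI.1 0 1 = 0 := rfl
@[simp] lemma negI10 : negI.1 1 0 = 0 := rfl
@[simp] lemma negI11 : negI.1 1 1 = -1 := rfl
@[simp] lemma Smi00 : Smi.1 0 0 = 0 := rfl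
@[simp] lemma Smi01 : Smi.1 0 1 = 1 := rfl
@[simp] lemma Smi10 : Smi.1 1 0 = -1 := rfl
@[simp] lemma Smi11 : Smi.1 1 1 = 0 := rfl

lemma inv_entries (A : SL2Z) :
    (A⁻¹).1 0 0 = A.1 1 1 ∧ (A⁻¹).1 0 1 = -A.1 0 1 ∧
    (A⁻¹).1 1 0 = -A.1 1 0 ∧ (A⁻¹).1 1 1 = A.1 0 0 := by
  rw [Matrix.SpecialLinearGroup.SL2_inv_expl A]
  exact ⟨rfl, rfl, rfl, rfl⟩

lemma negI_mul (A : SL2Z) (i j : Fin 2) : (negI * A).1 i j = -(A.1 i j) := by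
  fin_cases i <;> rw [mul_entry] <;> simp

lemma mul_negI (A : SL2Z) (i j : Fin 2) : (A * negI).1 i j = -(A.1 i j) := by
  fin_cases j <;> rw [mul_entry] <;> simp

lemma negI_mem_center : negI ∈ Subgroup.center SL2Z := by
  rw [Subgroup.mem_center_iff]
  intro B
  apply slext <;> rw [negI_mul, mul_negI]

lemma center_eq (A : SL2Z) : A ∈ Subgroup.center SL2Z ↔ A = 1 ∨ A = negI := by
  constructor
  · intro h
    rw [Subgroup.mem_center_iff] at h
    have hT := h Tm
    have hU := h Um
    have t00 : (Tm * A).1 0 0 = (A * Tm).1 0 0 := by rw [hT]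
    have t01 : (Tm * A).1 0 1 = (A * Tm).1 0 1 := by rw [hT]
    have u00 : (Um * A).1 0 0 = (A * Um).1 0 0 := by rw [hU]
    rw [mul_entry, mul_entry] at t00 t01 u00
    simp at t00 t01 u00
    -- t00 : a + c = a → c = 0 ; t01 : b + d = a + b → d = a ; u00 : a = a + b → b = 0
    have hdet := detA A
    have hc : A.1 1 0 = 0 := by omega
    have hb : A.1 0 1 = 0 := by omega
    have hd : A.1 1 1 = A.1 0 0 := by omega
    rw [hb, hd] at hdet
    simp at hdet
    rcases Int.eq_one_or_neg_one_of_mul_eq_one' (by linarith : A.1 0 0 * A.1 0 0 = 1) with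
      ⟨e1, _⟩ | ⟨e1, _⟩
    · exact Or.inl (slext (by rw [e1]; rfl) (by rw [hb]; rfl) (by rw [hc]; rfl)
        (by rw [hd, e1]; rfl))
    · exact Or.inr (slext (by rw [e1]; rfl) (by rw [hb]; rfl) (by rw [hc]; rfl)
        (by rw [hd, e1]; rfl))
  · rintro (rfl | rfl)
    · exact Subgroup.one_mem _
    · exact negI_mem_center

-- PSL layer
lemma mk_eq_mk {A B : SL2Z} :
    (QuotientGroup.mk A : PSL2Z) = QuotientGroup.mk B ↔ B = A ∨ B = A * negI := by
  rw [QuotientGroup.eq, center_eq]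
  constructor
  · rintro (h | h)
    · left; rw [inv_mul_eq_one] at h; exact h.symm
    · right; rw [inv_mul_eq_iff_eq_mul] at h; exact h
  · rintro (rfl | rfl)
    · left; simp
    · right; rw [inv_mul_eq_iff_eq_mul]

lemma negI_negI : negI * negI = 1 := by apply slext <;> rw [mul_entry] <;> simp

lemma negI_comm (A : SL2Z) : A * negI = negI * A :=
  Subgroup.mem_center_iff.mp negI_mem_center A

lemma mk_negI_mul (A : SL2Z) :
    (QuotientGroup.mk (negI * A) : PSL2Z) = QuotientGroup.mk A := by
  rw [mk_eq_mk]
  right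
  rw [mul_assoc, negI_comm A, ← mul_assoc, negI_negI, one_mul]

lemma Sp_eq : Sp = (QuotientGroup.mk Sm : PSL2Z) := rfl
lemma Tp_eq : Tp = (QuotientGroup.mk Tm : PSL2Z) := rfl
lemma Up_eq : Up = (QuotientGroup.mk Um : PSL2Z) := rfl

lemma letter_eq (sgn b : Bool) :
    letter sgn b = QuotientGroup.mk (if sgn then pletter b else nletter b) := by
  cases sgn <;> cases b
  · show Tp⁻¹ = QuotientGroup.mk Tmi
    rw [Tp_eq, ← Tm_inv, QuotientGroup.mk_inv]
  · show Up⁻¹ = QuotientGroup.mk Umi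
    rw [Up_eq, ← Um_inv, QuotientGroup.mk_inv]
  · rfl
  · rfl

lemma wordProd_eq (sgn : Bool) (l : List Bool) :
    wordProd sgn l = QuotientGroup.mk (if sgn then pw l else nw l) := by
  induction l with
  | nil => cases sgn <;> rfl
  | cons b t ih =>
    have h1 : wordProd sgn (b :: t) = letter sgn b * wordProd sgn t := by
      simp [wordProd]
    rw [h1, ih, letter_eq]
    cases sgn <;> simp only [if_false, if_true, nw_cons, pw_cons, QuotientGroup.mk_mul,
      Bool.false_eq_true, ite_false, ite_true]

def WP : Option (Bool × {l : List Bool // l ≠ []}) → SL2Z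
  | none => 1
  | some (sgn, l) => if sgn then pw l.1 else nw l.1

def MF (p : Bool × Option (Bool × {l : List Bool // l ≠ []})) : SL2Z :=
  (if p.1 then Sm else 1) * WP p.2

lemma canonicalForm_eq (p : Bool × Option (Bool × {l : List Bool // l ≠ []})) :
    canonicalForm p = QuotientGroup.mk (MF p) := by
  obtain ⟨s, w⟩ := p
  have h1 : ((if s then Sm else 1 : SL2Z) : PSL2Z) = (if s then Sp else 1) := by
    cases s
    · simp
    · simp [Sp_eq]
  have h2 : (match w with
      | none => (1 : PSL2Z)
      | some (sgn, l) => wordProd sgn l.val) = QuotientGroup.mk (WP w) := by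
    match w with
    | none => rfl
    | some (sgn, l) =>
      show wordProd sgn l.1 = _
      rw [wordProd_eq]
      rfl
  show (if s then Sp else 1) * _ = _
  rw [MF, QuotientGroup.mk_mul, h2, h1]

lemma nw_entries (l : List Bool) :
    1 ≤ (nw l).1 0 0 ∧ (nw l).1 0 1 ≤ 0 ∧ (nw l).1 1 0 ≤ 0 ∧ 1 ≤ (nw l).1 1 1 := by
  rw [nw_eq]
  obtain ⟨h1, h2, h3, h4⟩ := inv_entries (pw l.reverse)
  obtain ⟨b1, b2, b3, b4⟩ := pw_bounds l.reverse
  rw [h1, h2, h3, h4]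
  omega

lemma nw_off (l : List Bool) (h : l ≠ []) : (nw l).1 0 1 + (nw l).1 1 0 ≤ -1 := by
  rw [nw_eq]
  obtain ⟨_, h2, h3, _⟩ := inv_entries (pw l.reverse)
  have := pw_off l.reverse (by simpa using h)
  rw [h2, h3]
  omega

lemma WP_facts (w : Option (Bool × {l : List Bool // l ≠ []})) :
    1 ≤ (WP w).1 0 0 ∧ 1 ≤ (WP w).1 1 1 ∧
      ((0 ≤ (WP w).1 0 1 ∧ 0 ≤ (WP w).1 1 0) ∨ ((WP w).1 0 1 ≤ 0 ∧ (WP w).1 1 0 ≤ 0)) := by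
  match w with
  | none => simp [WP]
  | some (true, l) =>
    obtain ⟨h1, h2, h3, h4⟩ := pw_bounds l.1
    exact ⟨h1, h4, Or.inl ⟨h2, h3⟩⟩
  | some (false, l) =>
    obtain ⟨h1, h2, h3, h4⟩ := nw_entries l.1
    exact ⟨h1, h4, Or.inr ⟨h2, h3⟩⟩

lemma cross (P Q : SL2Z)
    (hP : 1 ≤ P.1 0 0 ∧ 1 ≤ P.1 1 1 ∧
      ((0 ≤ P.1 0 1 ∧ 0 ≤ P.1 1 0) ∨ (P.1 0 1 ≤ 0 ∧ P.1 1 0 ≤ 0)))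
    (hQ : 1 ≤ Q.1 0 0 ∧ 1 ≤ Q.1 1 1 ∧
      ((0 ≤ Q.1 0 1 ∧ 0 ≤ Q.1 1 0) ∨ (Q.1 0 1 ≤ 0 ∧ Q.1 1 0 ≤ 0)))
    (h : Sm * P = Q ∨ Sm * P = Q * negI) : False := by
  have e00 : (Sm * P).1 0 0 = -(P.1 1 0) := by
    rw [mul_entry]; show 0 * P.1 0 0 + (-1) * P.1 1 0 = _; ring
  have e11 : (Sm * P).1 1 1 = P.1 0 1 := by
    rw [mul_entry]; show 1 * P.1 0 1 + 0 * P.1 1 1 = _; ring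
  obtain ⟨p1, p2, pc⟩ := hP
  obtain ⟨q1, q2, qc⟩ := hQ
  rcases h with h | h
  · have h00 : Q.1 0 0 = -(P.1 1 0) := by rw [← h, e00]
    have h11 : Q.1 1 1 = P.1 0 1 := by rw [← h, e11]
    omega
  · have h00 : -(Q.1 0 0) = -(P.1 1 0) := by rw [← mul_negI, ← h, e00]
    have h11 : -(Q.1 1 1) = P.1 0 1 := by rw [← mul_negI, ← h, e11]
    omega

lemma WP_inj {w v : Option (Bool × {l : List Bool // l ≠ []})} (h : WP w = WP v) :
    w = v := by
  have hw : ∀ (sgn : Bool) (l : {l : List Bool // l ≠ []}),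
      WP (some (sgn, l)) = (if sgn then pw l.1 else nw l.1) := fun _ _ => rfl
  match w, v with
  | none, none => rfl
  | some (true, l), some (true, l') =>
    rw [hw, hw] at h
    simp only [ite_true] at h
    have := pw_injective _ _ h
    rw [Option.some.injEq, Prod.mk.injEq]
    exact ⟨rfl, Subtype.ext this⟩
  | some (false, l), some (false, l') =>
    rw [hw, hw] at h
    simp only [Bool.false_eq_true, ite_false] at h
    have := nw_injective _ _ h
    rw [Option.some.injEq, Prod.mk.injEq]
    exact ⟨rfl, Subtype.ext this⟩
  | none, some (true, l') =>
    exfalso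
    have h1 := pw_off l'.1 l'.2
    have h2 : WP (some (true, l')) = pw l'.1 := rfl
    rw [← h2, ← h] at h1
    simp [WP] at h1
  | none, some (false, l') =>
    exfalso
    have h1 := nw_off l'.1 l'.2
    have h2 : WP (some (false, l')) = nw l'.1 := rfl
    rw [← h2, ← h] at h1
    simp [WP] at h1
  | some (true, l), none =>
    exfalso
    have h1 := pw_off l.1 l.2
    have h2 : WP (some (true, l)) = pw l.1 := rfl
    rw [← h2, h] at h1
    simp [WP] at h1
  | some (false, l), none =>
    exfalso
    have h1 := nw_off l.1 l.2
    have h2 : WP (some (false, l)) = nw l.1 := rfl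
    rw [← h2, h] at h1
    simp [WP] at h1
  | some (true, l), some (false, l') =>
    exfalso
    have h1 := pw_off l.1 l.2
    have h2 := nw_off l'.1 l'.2
    have e1 : WP (some (true, l)) = pw l.1 := rfl
    have e2 : WP (some (false, l')) = nw l'.1 := rfl
    rw [← e1, h, e2] at h1
    omega
  | some (false, l), some (true, l') =>
    exfalso
    have h1 := nw_off l.1 l.2
    have h2 := pw_off l'.1 l'.2
    have e1 : WP (some (false, l)) = nw l.1 := rfl
    have e2 : WP (some (true, l')) = pw l'.1 := rfl
    rw [← e1, h, e2] at h1
    omega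

lemma cf_injective : Function.Injective canonicalForm := by
  intro p q h
  rw [canonicalForm_eq, canonicalForm_eq, mk_eq_mk] at h
  obtain ⟨s, w⟩ := p
  obtain ⟨t, v⟩ := q
  have hMp : MF (s, w) = (if s then Sm else 1) * WP w := rfl
  have hMq : MF (t, v) = (if t then Sm else 1) * WP v := rfl
  rw [hMp, hMq] at h
  cases s <;> cases t
  · -- both false
    simp only [if_false, Bool.false_eq_true, ite_false, one_mul] at h
    have hwv : WP v = WP w := by
      rcases h with h | h
      · exact h
      · exfalso
        have h00 : (WP v).1 0 0 = -((WP w).1 0 0) := by rw [h, mul_negI]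
        have := (WP_facts w).1
        have := (WP_facts v).1
        omega
    rw [WP_inj hwv]
  · -- s false, t true : Sm * WP v = WP w ∨ ... *negI
    exfalso
    simp only [Bool.false_eq_true, ite_false, ite_true, one_mul] at h
    exact cross (WP v) (WP w) (WP_facts v) (WP_facts w) h
  · exfalso
    simp only [Bool.false_eq_true, ite_false, ite_true, one_mul] at h
    -- h : WP v = Sm * WP w ∨ WP v = Sm * WP w * negI
    apply cross (WP w) (WP v) (WP_facts w) (WP_facts v)
    rcases h with h | h
    · exact Or.inl h.symm
    · -- WP v = Sm * WP w * negI → Sm * WP w = WP v * negI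
      right
      rw [h, mul_assoc, mul_assoc, negI_negI, mul_one]
  · simp only [ite_true, one_mul] at h
    have hwv : WP v = WP w := by
      rcases h with h | h
      · exact mul_left_cancel h
      · exfalso
        rw [mul_assoc] at h
        have h2 : WP v = WP w * negI := mul_left_cancel h
        have h00 : (WP v).1 0 0 = -((WP w).1 0 0) := by rw [h2, mul_negI]
        have := (WP_facts w).1
        have := (WP_facts v).1
        omega
    rw [WP_inj hwv]

lemma prod01 {x y : ℤ} (hx : 0 ≤ x) (hy : 0 ≤ y) (h : x * y ≤ 1) :
    x = 0 ∨ y = 0 ∨ (x = 1 ∧ y = 1) := by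
  rcases hx.lt_or_eq with hx' | hx'
  · rcases hy.lt_or_eq with hy' | hy'
    · right; right
      have h1 : x * 1 ≤ x * y := mul_le_mul_of_nonneg_left (by omega) hx
      have h2 : 1 * y ≤ x * y := mul_le_mul_of_nonneg_right (by omega) hy
      omega
    · right; left; omega
  · left; omega

lemma signcases (a b c d : ℤ) (h : a * d - b * c = 1) :
    ((0 ≤ a ∧ 0 ≤ b ∧ 0 ≤ c ∧ 0 ≤ d) ∨ (0 ≤ a ∧ b ≤ 0 ∧ c ≤ 0 ∧ 0 ≤ d)) ∨
    ((a ≤ 0 ∧ b ≤ 0 ∧ c ≤ 0 ∧ d ≤ 0) ∨ (a ≤ 0 ∧ 0 ≤ b ∧ 0 ≤ c ∧ d ≤ 0)) ∨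
    ((0 ≤ c ∧ 0 ≤ d ∧ a ≤ 0 ∧ b ≤ 0) ∨ (0 ≤ c ∧ d ≤ 0 ∧ 0 ≤ a ∧ b ≤ 0)) ∨
    ((c ≤ 0 ∧ d ≤ 0 ∧ 0 ≤ a ∧ 0 ≤ b) ∨ (c ≤ 0 ∧ 0 ≤ d ∧ a ≤ 0 ∧ 0 ≤ b)) := by
  rcases le_or_gt 0 a with ha | ha <;> rcases le_or_gt 0 b with hb | hb <;>
    rcases le_or_gt 0 c with hc | hc <;> rcases le_or_gt 0 d with hd | hd
  -- (+,+,+,+)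
  · left; left; omega
  -- (+,+,+,-)
  · exfalso
    have h1 : 0 ≤ b * c := mul_nonneg hb hc
    have h2 : a * d ≤ 0 := mul_nonpos_of_nonneg_of_nonpos ha (by omega)
    linarith
  -- (+,+,-,+)
  · have hbc : b * c ≤ 0 := mul_nonpos_of_nonneg_of_nonpos hb (by omega)
    have had0 : 0 ≤ a * d := mul_nonneg ha hd
    rcases prod01 ha hd (by linarith) with h1 | h1 | ⟨h1, h2⟩
    · right; right; right; right; omega
    · right; right; right; left; omega
    · have hb0 : b * c = 0 := by rw [h1, h2] at h; linarith
      rcases mul_eq_zero.mp hb0 with h3 | h3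
      · left; right; omega
      · omega
  -- (+,+,-,-)
  · right; right; right; left; omega
  -- (+,-,+,+)
  · have hbc : b * c ≤ 0 := mul_nonpos_of_nonpos_of_nonneg (by omega) hc
    have had0 : 0 ≤ a * d := mul_nonneg ha hd
    rcases prod01 ha hd (by linarith) with h1 | h1 | ⟨h1, h2⟩
    · right; right; left; left; omega
    · right; right; left; right; omega
    · have hb0 : b * c = 0 := by rw [h1, h2] at h; linarith
      rcases mul_eq_zero.mp hb0 with h3 | h3
      · omega
      · left; right; omega
  -- (+,-,+,-)
  · right; right; left; right; omega
  -- (+,-,-,+)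
  · left; right; omega
  -- (+,-,-,-)
  · exfalso
    have h1 : 0 < b * c := mul_pos_of_neg_of_neg hb hc
    have h2 : a * d ≤ 0 := mul_nonpos_of_nonneg_of_nonpos ha (by omega)
    linarith
  -- (-,+,+,+)
  · exfalso
    have h1 : 0 ≤ b * c := mul_nonneg hb hc
    have h2 : a * d ≤ 0 := mul_nonpos_of_nonpos_of_nonneg (by omega) hd
    linarith
  -- (-,+,+,-)
  · right; left; right; omega
  -- (-,+,-,+)
  · right; right; right; right; omega
  -- (-,+,-,-)
  · have hbc : b * c ≤ 0 := mul_nonpos_of_nonneg_of_nonpos hb (by omega)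
    have had : (-a) * (-d) ≤ 1 := by rw [neg_mul_neg]; linarith
    rcases prod01 (by omega : (0:ℤ) ≤ -a) (by omega : (0:ℤ) ≤ -d) had with h1 | h1 | ⟨h1, h2⟩
    · omega
    · omega
    · have ha1 : a = -1 := by omega
      have hd1 : d = -1 := by omega
      have hb0 : b * c = 0 := by rw [ha1, hd1] at h; linarith
      rcases mul_eq_zero.mp hb0 with h3 | h3
      · right; left; left; omega
      · omega
  -- (-,-,+,+)
  · right; right; left; left; omega
  -- (-,-,+,-)
  · have hbc : b * c ≤ 0 := mul_nonpos_of_nonpos_of_nonneg (by omega) hc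
    have had : (-a) * (-d) ≤ 1 := by rw [neg_mul_neg]; linarith
    rcases prod01 (by omega : (0:ℤ) ≤ -a) (by omega : (0:ℤ) ≤ -d) had with h1 | h1 | ⟨h1, h2⟩
    · omega
    · omega
    · have ha1 : a = -1 := by omega
      have hd1 : d = -1 := by omega
      have hb0 : b * c = 0 := by rw [ha1, hd1] at h; linarith
      rcases mul_eq_zero.mp hb0 with h3 | h3
      · omega
      · right; left; left; omega
  -- (-,-,-,+)
  · exfalso
    have h1 : 0 < b * c := mul_pos_of_neg_of_neg hb hc
    have h2 : a * d ≤ 0 := mul_nonpos_of_nonpos_of_nonneg (by omega) hd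
    linarith
  -- (-,-,-,-)
  · right; left; left; omega

lemma cf_val (s : Bool) (w : Option (Bool × {l : List Bool // l ≠ []})) :
    canonicalForm (s, w) = (if s then Sp else 1) * QuotientGroup.mk (WP w) := by
  rw [canonicalForm_eq]
  have hMF : MF (s, w) = (if s then Sm else 1) * WP w := rfl
  rw [hMF, QuotientGroup.mk_mul]
  congr 1
  cases s
  · simp
  · simp [Sp_eq]

lemma reach (B : SL2Z) (s : Bool) (h : posM B ∨ posM B⁻¹) :
    ∃ p, canonicalForm p = (if s then Sp else 1) * (QuotientGroup.mk B : PSL2Z) := by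
  rcases h with h | h
  · obtain ⟨l, hl⟩ := pos_exists B h
    cases l with
    | nil =>
      refine ⟨(s, none), ?_⟩
      rw [cf_val]
      have : WP none = B := by rw [← hl]; rfl
      rw [this]
    | cons b t =>
      refine ⟨(s, some (true, ⟨b :: t, by simp⟩)), ?_⟩
      rw [cf_val]
      have : WP (some (true, ⟨b :: t, by simp⟩)) = B := by rw [← hl]; rfl
      rw [this]
  · obtain ⟨l, hl⟩ := pos_exists B⁻¹ h
    have hB : nw l.reverse = B := by
      rw [nw_eq, List.reverse_reverse, hl, inv_inv]
    cases l with
    | nil =>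
      refine ⟨(s, none), ?_⟩
      rw [cf_val]
      have : WP none = B := by rw [← hB]; rfl
      rw [this]
    | cons b t =>
      refine ⟨(s, some (false, ⟨(b :: t).reverse, by simp⟩)), ?_⟩
      rw [cf_val]
      have : WP (some (false, ⟨(b :: t).reverse, by simp⟩)) = B := by rw [← hB]; rfl
      rw [this]

lemma Smi_entries (A : SL2Z) :
    (Smi * A).1 0 0 = A.1 1 0 ∧ (Smi * A).1 0 1 = A.1 1 1 ∧
    (Smi * A).1 1 0 = -(A.1 0 0) ∧ (Smi * A).1 1 1 = -(A.1 0 1) := by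
  refine ⟨?_, ?_, ?_, ?_⟩ <;> rw [mul_entry] <;> simp

lemma cf_surjective : Function.Surjective canonicalForm := by
  intro g
  obtain ⟨A, rfl⟩ := QuotientGroup.mk_surjective g
  obtain ⟨i1, i2, i3, i4⟩ := inv_entries A
  have key := signcases (A.1 0 0) (A.1 0 1) (A.1 1 0) (A.1 1 1) (detA A)
  rcases key with (h | h) | (h | h) | (h | h) | (h | h)
  · obtain ⟨p, hp⟩ := reach A false (Or.inl ⟨h.1, h.2.1, h.2.2.1, h.2.2.2⟩)
    exact ⟨p, by rw [hp]; simp⟩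
  · obtain ⟨p, hp⟩ := reach A false (Or.inr ⟨by omega, by omega, by omega, by omega⟩)
    exact ⟨p, by rw [hp]; simp⟩
  · -- -A nonneg
    set B := negI * A with hBdef
    have hE : ∀ i j, B.1 i j = -(A.1 i j) := fun i j => negI_mul A i j
    obtain ⟨p, hp⟩ := reach B false (Or.inl ⟨by rw [hE]; omega, by rw [hE]; omega,
      by rw [hE]; omega, by rw [hE]; omega⟩)
    refine ⟨p, ?_⟩
    rw [hp, mk_negI_mul]
    simp
  · set B := negI * A with hBdef
    have hE : ∀ i j, B.1 i j = -(A.1 i j) := fun i j => negI_mul A i j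
    obtain ⟨j1, j2, j3, j4⟩ := inv_entries B
    obtain ⟨p, hp⟩ := reach B false (Or.inr ⟨by rw [j1, hE]; omega, by rw [j2, hE]; omega,
      by rw [j3, hE]; omega, by rw [j4, hE]; omega⟩)
    refine ⟨p, ?_⟩
    rw [hp, mk_negI_mul]
    simp
  · -- Smi * A nonneg
    set B := Smi * A with hBdef
    obtain ⟨e1, e2, e3, e4⟩ := Smi_entries A
    have hrel : Sm * B = A := by rw [hBdef, ← mul_assoc, Sm_Smi, one_mul]
    obtain ⟨p, hp⟩ := reach B true (Or.inl ⟨by rw [e1]; omega, by rw [e2]; omega,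
      by rw [e3]; omega, by rw [e4]; omega⟩)
    refine ⟨p, ?_⟩
    rw [hp, if_pos rfl, Sp_eq, ← QuotientGroup.mk_mul, hrel]
  · set B := Smi * A with hBdef
    obtain ⟨e1, e2, e3, e4⟩ := Smi_entries A
    obtain ⟨j1, j2, j3, j4⟩ := inv_entries B
    have hrel : Sm * B = A := by rw [hBdef, ← mul_assoc, Sm_Smi, one_mul]
    obtain ⟨p, hp⟩ := reach B true (Or.inr ⟨by rw [j1, e4]; omega, by rw [j2, e2]; omega,
      by rw [j3, e3]; omega, by rw [j4, e1]; omega⟩)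
    refine ⟨p, ?_⟩
    rw [hp, if_pos rfl, Sp_eq, ← QuotientGroup.mk_mul, hrel]
  · -- negI * Smi * A nonneg
    set B := negI * (Smi * A) with hBdef
    obtain ⟨e1, e2, e3, e4⟩ := Smi_entries A
    have hE : ∀ i j, B.1 i j = -((Smi * A).1 i j) := fun i j => negI_mul _ i j
    have hrel : Sp * (QuotientGroup.mk B : PSL2Z) = QuotientGroup.mk A := by
      rw [hBdef, mk_negI_mul, Sp_eq, ← QuotientGroup.mk_mul, ← mul_assoc, Sm_Smi, one_mul]
    obtain ⟨p, hp⟩ := reach B true (Or.inl ⟨by rw [hE, e1]; omega, by rw [hE, e2]; omega,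
      by rw [hE, e3]; omega, by rw [hE, e4]; omega⟩)
    refine ⟨p, ?_⟩
    rw [hp, if_pos rfl, hrel]
  · set B := negI * (Smi * A) with hBdef
    obtain ⟨e1, e2, e3, e4⟩ := Smi_entries A
    have hE : ∀ i j, B.1 i j = -((Smi * A).1 i j) := fun i j => negI_mul _ i j
    obtain ⟨j1, j2, j3, j4⟩ := inv_entries B
    have hrel : Sp * (QuotientGroup.mk B : PSL2Z) = QuotientGroup.mk A := by
      rw [hBdef, mk_negI_mul, Sp_eq, ← QuotientGroup.mk_mul, ← mul_assoc, Sm_Smi, one_mul]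
    obtain ⟨p, hp⟩ := reach B true (Or.inr ⟨by rw [j1, hE, e4]; omega, by rw [j2, hE, e2]; omega,
      by rw [j3, hE, e3]; omega, by rw [j4, hE, e1]; omega⟩)
    refine ⟨p, ?_⟩
    rw [hp, if_pos rfl, hrel]

end CF

/-- Every element of `PSL(2,ℤ)` is uniquely of one of the forms: (i) the identity;
(ii) a nonempty product of elements of `{U, T}` or a nonempty product of elements of
`{U⁻¹, T⁻¹}`; (iii) `S` times an element of the form (i) or (ii). -/
theorem canonicalForm_bijective : Function.Bijective canonicalForm :=
  ⟨CF.cf_injective, CF.cf_surjective⟩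
end
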